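/- arXiv:1312.1387 — 10 statements merged into one kernel-verified Lean document; each statement's English description precedes it below -/
import Mathlib

section
/- Fix i ∈ {1,…,d} and assume ⟨μ, v^{(i)}⟩ ≠ 0. Then: (a) the set P^{(i)} = {θ ∈ ℝ^d : γ_k(θ) = 0 for all k ≠ i} equals the line {t·v^{(i)} : t ∈ ℝ}; (b) the point θ^{(i,r)} := Δ_i v^{(i)} is nonzero and satisfies γ(θ^{(i,r)}) = 0 and γ_i(θ^{(i,r)}) = Δ_i; (c) θ^{(i,r)} is the unique nonzero point of {θ ∈ ℝ^d : γ(θ) = 0} ∩ P^{(i)}. -/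
open Matrix

/-!
The conditions `γ_k(θ) = 0` for `k ≠ i` say that `θ ᵥ* R` is supported on `{i}`, and since
`v⁽ⁱ⁾ ᵥ* R = eᵢ` (because `v⁽ⁱ⁾` is the `i`-th row of `R⁻¹`) this forces `θ` onto the line
spanned by `v⁽ⁱ⁾`. Along that line `γ(t • v⁽ⁱ⁾) = t (-(1/2) t ⟨v⁽ⁱ⁾, Σ v⁽ⁱ⁾⟩ - ⟨μ, v⁽ⁱ⁾⟩)`,
whose only nonzero root is `t = Δ_i`.
-/

namespace Matrix

variable {n K : Type*} [Fintype n] [DecidableEq n] [CommRing K]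

theorem row_inv_vecMul {R : Matrix n n K} (hR : IsUnit R) (i : n) :
    R⁻¹ i ᵥ* R = Pi.single i 1 := by
  rw [← mul_apply_eq_vecMul, nonsing_inv_mul _ ((isUnit_iff_isUnit_det R).mp hR)]
  exact funext fun _ => one_eq_pi_single

theorem row_inv_ne_zero [Nontrivial K] {R : Matrix n n K} (hR : IsUnit R) (i : n) :
    R⁻¹ i ≠ 0 := by
  intro h
  simpa [h] using congrFun (row_inv_vecMul hR i) i

theorem forall_ne_vecMul_eq_zero_iff {R : Matrix n n K} (hR : IsUnit R) (i : n) (θ : n → K) :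
    (∀ k, k ≠ i → (θ ᵥ* R) k = 0) ↔ ∃ t : K, θ = t • R⁻¹ i := by
  constructor
  · intro h
    have hsingle : θ ᵥ* R = Pi.single i ((θ ᵥ* R) i) := by
      funext k
      by_cases hk : k = i
      · subst hk; simp
      · simp [h k hk, hk]
    refine ⟨(θ ᵥ* R) i, ?_⟩
    calc θ = θ ᵥ* R ᵥ* R⁻¹ := by
          rw [vecMul_vecMul, mul_nonsing_inv _ ((isUnit_iff_isUnit_det R).mp hR), vecMul_one]
      _ = (θ ᵥ* R) i • R⁻¹ i := by nth_rw 1 [hsingle]; rw [single_vecMul]; rfl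
  · rintro ⟨t, rfl⟩ k hk
    simp [smul_vecMul, row_inv_vecMul hR, hk]

end Matrix

section QuadraticAlongLine

variable {n K : Type*} [Fintype n] [Field K]

theorem quadratic_smul (S : Matrix n n K) (μ w : n → K) (t : K) :
    -(1/2 : K) * ((t • w) ⬝ᵥ S *ᵥ (t • w)) - μ ⬝ᵥ (t • w)
      = t * (-(1/2) * t * (w ⬝ᵥ S *ᵥ w) - μ ⬝ᵥ w) := by
  simp only [mulVec_smul, dotProduct_smul, smul_dotProduct, smul_eq_mul]
  ring

theorem mul_quadratic_eq_zero_iff [CharZero K] {a b t : K} (ha : a ≠ 0) :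
    t * (-(1/2) * t * a - b) = 0 ↔ t = 0 ∨ t = -2 * b / a := by
  rw [mul_eq_zero, eq_div_iff ha]
  exact or_congr_right
    ⟨fun h => by linear_combination -2 * h, fun h => by linear_combination -(1/2) * h⟩

end QuadraticAlongLine

theorem statement0_general (d : ℕ)
    (S : Matrix (Fin d) (Fin d) ℝ) (hS : S.PosDef)
    (μ : Fin d → ℝ) (R : Matrix (Fin d) (Fin d) ℝ) (hR : IsUnit R)
    (Q : Matrix (Fin d) (Fin d) ℝ) (hQ : Q = R⁻¹)
    (v : Fin d → Fin d → ℝ) (hv : ∀ i j, v i j = Q i j)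
    (Δ : Fin d → ℝ)
    (hΔ : ∀ i, Δ i = -2 * (μ ⬝ᵥ v i) / (v i ⬝ᵥ S.mulVec (v i)))
    (γ : (Fin d → ℝ) → ℝ)
    (hγ : ∀ θ, γ θ = -(1/2 : ℝ) * (θ ⬝ᵥ S.mulVec θ) - μ ⬝ᵥ θ)
    (γc : Fin d → (Fin d → ℝ) → ℝ)
    (hγc : ∀ k θ, γc k θ = (fun j => R j k) ⬝ᵥ θ)
    (i : Fin d) (hμv : μ ⬝ᵥ v i ≠ 0) :
    ({θ : Fin d → ℝ | ∀ k, k ≠ i → γc k θ = 0} = {θ : Fin d → ℝ | ∃ t : ℝ, θ = t • v i})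
    ∧ (Δ i • v i ≠ 0 ∧ γ (Δ i • v i) = 0 ∧ γc i (Δ i • v i) = Δ i)
    ∧ (∀ θ : Fin d → ℝ, γ θ = 0 → (∀ k, k ≠ i → γc k θ = 0) → θ ≠ 0 → θ = Δ i • v i) := by
  subst hQ
  have hvi : v i = R⁻¹ i := funext (hv i)
  have hγc' : ∀ k θ, γc k θ = (θ ᵥ* R) k := fun k θ => by rw [hγc, dotProduct_comm]; rfl
  have hP : ∀ θ, (∀ k, k ≠ i → γc k θ = 0) ↔ ∃ t : ℝ, θ = t • v i := by
    simpa only [hγc', hvi] using forall_ne_vecMul_eq_zero_iff hR i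
  have hvne : v i ≠ 0 := hvi ▸ row_inv_ne_zero hR i
  have hpos : 0 < v i ⬝ᵥ S *ᵥ v i := by simpa using hS.dotProduct_mulVec_pos hvne
  have hroot : ∀ t, γ (t • v i) = 0 ↔ t = 0 ∨ t = Δ i := fun t => by
    rw [hγ, quadratic_smul, mul_quadratic_eq_zero_iff hpos.ne', hΔ]
  have hΔne : Δ i ≠ 0 := by
    rw [hΔ]; exact div_ne_zero (mul_ne_zero (by norm_num) hμv) hpos.ne'
  refine ⟨Set.ext hP, ⟨smul_ne_zero hΔne hvne, (hroot _).2 (Or.inr rfl), ?_⟩, ?_⟩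
  · simp [hγc', hvi, smul_vecMul, row_inv_vecMul hR]
  · intro θ hθ hθP hne
    obtain ⟨t, rfl⟩ := (hP θ).1 hθP
    obtain rfl | rfl := (hroot t).1 hθ
    · exact absurd (zero_smul ℝ _) hne
    · rfl

/-- Fix `i` and assume `⟨μ, v⁽ⁱ⁾⟩ ≠ 0`. Then
(a) `P⁽ⁱ⁾ = {θ : γ_k(θ) = 0 for all k ≠ i}` is the line `{t • v⁽ⁱ⁾}`;
(b) `θ⁽ⁱ'ʳ⁾ := Δ_i • v⁽ⁱ⁾` is nonzero, `γ(θ⁽ⁱ'ʳ⁾) = 0` and `γ_i(θ⁽ⁱ'ʳ⁾) = Δ_i`;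
(c) `θ⁽ⁱ'ʳ⁾` is the unique nonzero point of `{γ = 0} ∩ P⁽ⁱ⁾`. -/
theorem statement0 (d : ℕ) (hd : 1 ≤ d)
    (S : Matrix (Fin d) (Fin d) ℝ) (hS : S.PosDef)
    (μ : Fin d → ℝ) (R : Matrix (Fin d) (Fin d) ℝ) (hR : IsUnit R)
    (Q : Matrix (Fin d) (Fin d) ℝ) (hQ : Q = R⁻¹)
    (v : Fin d → Fin d → ℝ) (hv : ∀ i j, v i j = Q i j)
    (Δ : Fin d → ℝ)
    (hΔ : ∀ i, Δ i = -2 * (μ ⬝ᵥ v i) / (v i ⬝ᵥ S.mulVec (v i)))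
    (γ : (Fin d → ℝ) → ℝ)
    (hγ : ∀ θ, γ θ = -(1/2 : ℝ) * (θ ⬝ᵥ S.mulVec θ) - μ ⬝ᵥ θ)
    (γc : Fin d → (Fin d → ℝ) → ℝ)
    (hγc : ∀ k θ, γc k θ = (fun j => R j k) ⬝ᵥ θ)
    (i : Fin d) (hμv : μ ⬝ᵥ v i ≠ 0) :
    ({θ : Fin d → ℝ | ∀ k, k ≠ i → γc k θ = 0} = {θ : Fin d → ℝ | ∃ t : ℝ, θ = t • v i})
    ∧ (Δ i • v i ≠ 0 ∧ γ (Δ i • v i) = 0 ∧ γc i (Δ i • v i) = Δ i)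
    ∧ (∀ θ : Fin d → ℝ, γ θ = 0 → (∀ k, k ≠ i → γc k θ = 0) → θ ≠ 0 → θ = Δ i • v i) :=
  statement0_general d S hS μ R hR Q hQ v hv Δ hΔ γ hγ γc hγc i hμv
end

section
/- Assume Σ_{ii} > 0 and R_{ii} ≠ 0 for all i, and suppose α ∈ ℝ^d satisfies the polynomial identity γ(θ) = Σ_{i=1}^d (Σ_{ii}/(2R_{ii})) γ_i(θ)(α_i - θ_i) for all θ ∈ ℝ^d. If moreover ⟨μ, v^{(i)}⟩ ≠ 0 for every i, then α_i = Δ_i Q_{ii} for every i ∈ {1,…,d}. -/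
open Matrix

/-!
Write `cᵢ = Σᵢᵢ / (2 Rᵢᵢ)`. Comparing the even and odd parts in `θ` of the identity splits it into
the linear identity `R (c ∘ α) = -μ`, i.e. `cᵢ αᵢ = -⟨μ, v⁽ⁱ⁾⟩`, and the quadratic identity
`⟨θ, Σθ⟩ = 2 ∑ᵢ cᵢ γᵢ(θ) θᵢ`. Since `γₖ(v⁽ⁱ⁾) = (QR)ᵢₖ = δᵢₖ`, the latter at `θ = v⁽ⁱ⁾` reads
`⟨v⁽ⁱ⁾, Σ v⁽ⁱ⁾⟩ = 2 cᵢ Qᵢᵢ`, which is positive; hence `cᵢ ≠ 0`, `Qᵢᵢ ≠ 0`, and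
`αᵢ = -⟨μ, v⁽ⁱ⁾⟩ / cᵢ = Δᵢ Qᵢᵢ`.
-/

theorem add_eq_add_iff_of_even_of_odd {V K : Type*} [Neg V] [Field K] [CharZero K]
    {q₁ q₂ l₁ l₂ : V → K} (hq₁ : Function.Even q₁) (hq₂ : Function.Even q₂)
    (hl₁ : Function.Odd l₁) (hl₂ : Function.Odd l₂) :
    q₁ + l₁ = q₂ + l₂ ↔ q₁ = q₂ ∧ l₁ = l₂ := by
  refine ⟨fun h => ?_, fun ⟨hq, hl⟩ => hq ▸ hl ▸ rfl⟩
  have hx (x : V) : q₁ x + l₁ x = q₂ x + l₂ x := congrFun h x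
  have hnx (x : V) : q₁ x - l₁ x = q₂ x - l₂ x := by
    simpa [hq₁ x, hq₂ x, hl₁ x, hl₂ x, sub_eq_add_neg] using congrFun h (-x)
  exact ⟨funext fun x => by linear_combination (hx x + hnx x) / 2,
    funext fun x => by linear_combination (hx x - hnx x) / 2⟩

theorem Matrix.vecMul_eq_single_of_mul_eq_one {n α : Type*} [Fintype n] [DecidableEq n]
    [Semiring α] {Q R : Matrix n n α} (hQR : Q * R = 1) (i : n) :
    Q i ᵥ* R = Pi.single i 1 := by
  rw [← mul_apply_eq_vecMul, hQR]
  ext j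
  exact one_eq_pi_single

theorem quadratic_and_linear_parts_of_forall_eq {n K : Type*} [Fintype n] [Field K] [CharZero K]
    (S R : Matrix n n K) (μ c α : n → K)
    (h : ∀ θ, -(1 / 2) * (θ ⬝ᵥ S *ᵥ θ) - μ ⬝ᵥ θ = ∑ i, c i * (θ ᵥ* R) i * (α i - θ i)) :
    (∀ θ, θ ⬝ᵥ S *ᵥ θ = 2 * ∑ i, c i * (θ ᵥ* R) i * θ i) ∧ R *ᵥ (c * α) = -μ := by
  have hsplit : (fun θ => -(1 / 2) * (θ ⬝ᵥ S *ᵥ θ)) + (fun θ => -(μ ⬝ᵥ θ)) =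
      (fun θ => -∑ i, c i * (θ ᵥ* R) i * θ i) + (fun θ => θ ⬝ᵥ R *ᵥ (c * α)) := by
    funext θ
    rw [Pi.add_apply, Pi.add_apply, ← sub_eq_add_neg, h θ, dotProduct_mulVec, dotProduct,
      ← Finset.sum_neg_distrib, ← Finset.sum_add_distrib]
    exact Finset.sum_congr rfl fun i _ => by simp only [Pi.mul_apply]; ring
  obtain ⟨hquad, hlin⟩ := (add_eq_add_iff_of_even_of_odd (fun θ => by simp [mulVec_neg])
    (fun θ => by simp [neg_vecMul]) (fun θ => by simp) (fun θ => by simp)).mp hsplit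
  refine ⟨fun θ => ?_, dotProduct_eq _ _ fun θ => ?_⟩
  · linear_combination -2 * congrFun hquad θ
  · rw [dotProduct_comm, neg_dotProduct]
    exact (congrFun hlin θ).symm

theorem statement3_general (d : ℕ)
    (S : Matrix (Fin d) (Fin d) ℝ) (hS : S.PosDef)
    (μ : Fin d → ℝ) (R : Matrix (Fin d) (Fin d) ℝ) (hR : IsUnit R)
    (Q : Matrix (Fin d) (Fin d) ℝ) (hQ : Q = R⁻¹)
    (v : Fin d → Fin d → ℝ) (hv : ∀ i j, v i j = Q i j)
    (Δ : Fin d → ℝ)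
    (hΔ : ∀ i, Δ i = -2 * (μ ⬝ᵥ v i) / (v i ⬝ᵥ S.mulVec (v i)))
    (γ : (Fin d → ℝ) → ℝ)
    (hγ : ∀ θ, γ θ = -(1/2 : ℝ) * (θ ⬝ᵥ S.mulVec θ) - μ ⬝ᵥ θ)
    (γc : Fin d → (Fin d → ℝ) → ℝ)
    (hγc : ∀ k θ, γc k θ = (fun j => R j k) ⬝ᵥ θ)
    (α : Fin d → ℝ)
    (hα : ∀ θ : Fin d → ℝ, γ θ = ∑ i, S i i / (2 * R i i) * γc i θ * (α i - θ i)) :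
    ∀ i : Fin d, α i = Δ i * Q i i := by
  set c : Fin d → ℝ := fun i => S i i / (2 * R i i)
  have hQR : Q * R = 1 := hQ ▸ nonsing_inv_mul R ((isUnit_iff_isUnit_det R).mp hR)
  obtain rfl : Q = v := (funext fun i => funext (hv i)).symm
  have hγc_vecMul (k : Fin d) (θ : Fin d → ℝ) : γc k θ = (θ ᵥ* R) k := by
    rw [hγc, dotProduct_comm]; rfl
  obtain ⟨hquad, hlin⟩ := quadratic_and_linear_parts_of_forall_eq S R μ c α fun θ => by
    simpa only [hγ, hγc_vecMul] using hα θ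
  intro i
  have hcα : c i * α i = -(μ ⬝ᵥ Q i) := by
    have := congrFun (congrArg (Q *ᵥ ·) hlin) i
    rwa [mulVec_mulVec, hQR, one_mulVec, mulVec_neg, Pi.neg_apply, mulVec, dotProduct_comm] at this
  have hrow : Q i ⬝ᵥ S *ᵥ Q i = 2 * (c i * Q i i) := by
    simp [hquad, vecMul_eq_single_of_mul_eq_one hQR, Pi.single_apply]
  have hpos : 0 < Q i ⬝ᵥ S *ᵥ Q i := by
    have hne : Q i ≠ 0 := fun h => by
      simpa [h] using congrFun (vecMul_eq_single_of_mul_eq_one hQR i) i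
    simpa using hS.dotProduct_mulVec_pos hne
  obtain ⟨hc, hq⟩ := mul_ne_zero_iff.mp (by linarith : c i * Q i i ≠ 0)
  rw [hΔ, hrow]
  field_simp
  linear_combination hcα

/-- If `Σ_{ii} > 0` and `R_{ii} ≠ 0` for all `i`, and `α` satisfies the
polynomial identity `γ(θ) = ∑ᵢ (Σ_{ii}/(2R_{ii})) γᵢ(θ)(αᵢ - θᵢ)` for all `θ`, and
moreover `⟨μ, v⁽ⁱ⁾⟩ ≠ 0` for every `i`, then `αᵢ = Δᵢ Q_{ii}` for every `i`. -/
theorem statement3 (d : ℕ) (hd : 1 ≤ d)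
    (S : Matrix (Fin d) (Fin d) ℝ) (hS : S.PosDef)
    (μ : Fin d → ℝ) (R : Matrix (Fin d) (Fin d) ℝ) (hR : IsUnit R)
    (Q : Matrix (Fin d) (Fin d) ℝ) (hQ : Q = R⁻¹)
    (v : Fin d → Fin d → ℝ) (hv : ∀ i j, v i j = Q i j)
    (Δ : Fin d → ℝ)
    (hΔ : ∀ i, Δ i = -2 * (μ ⬝ᵥ v i) / (v i ⬝ᵥ S.mulVec (v i)))
    (γ : (Fin d → ℝ) → ℝ)
    (hγ : ∀ θ, γ θ = -(1/2 : ℝ) * (θ ⬝ᵥ S.mulVec θ) - μ ⬝ᵥ θ)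
    (γc : Fin d → (Fin d → ℝ) → ℝ)
    (hγc : ∀ k θ, γc k θ = (fun j => R j k) ⬝ᵥ θ)
    (hSd : ∀ i, 0 < S i i) (hRd : ∀ i, R i i ≠ 0)
    (α : Fin d → ℝ)
    (hα : ∀ θ : Fin d → ℝ, γ θ = ∑ i, S i i / (2 * R i i) * γc i θ * (α i - θ i))
    (hμv : ∀ i, μ ⬝ᵥ v i ≠ 0) :
    ∀ i : Fin d, α i = Δ i * Q i i :=
  statement3_general d S hS μ R hR Q hQ v hv Δ hΔ γ hγ γc hγc α hα
end

section
/- Let K be a nonempty subset of J = {1,…,d} such that Q^{(K,K)} is invertible. Define R̃(K) = (Q^{(K,K)})⁻¹, Σ̃(K) = (Q^{(K,K)})⁻¹ (QΣQᵀ)^{(K,K)} ((Q^{(K,K)})⁻¹)ᵀ, and μ̃(K) = (Q^{(K,K)})⁻¹ (Qμ)^K. For η ∈ ℝ^K set x = ((Q^{(K,K)})⁻¹)ᵀ η ∈ ℝ^K and define θ(η) ∈ ℝ^d by θ(η)_m = Σ_{i∈K} Q_{im} x_i for m ∈ J. Then: (i) θ(η)_m = η_m for every m ∈ K; (ii) for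 j ∈ K, γ_j(θ(η)) = Σ_{i∈K} η_i [R̃(K)]_{ij}, and for j ∉ K, γ_j(θ(η)) = 0; (iii) γ(θ(η)) = -(1/2)⟨η, Σ̃(K) η⟩ - ⟨μ̃(K), η⟩. -/
open Matrix

/-- For nonempty `K ⊆ J` with `Q^{(K,K)}` invertible, define
`R̃(K) = (Q^{(K,K)})⁻¹`, `Σ̃(K) = (Q^{(K,K)})⁻¹ (QΣQᵀ)^{(K,K)} ((Q^{(K,K)})⁻¹)ᵀ`,
`μ̃(K) = (Q^{(K,K)})⁻¹ (Qμ)^K`. For `η ∈ ℝ^K` set `x = ((Q^{(K,K)})⁻¹)ᵀ η` and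
`θ(η)_m = ∑_{i∈K} Q_{im} x_i`. Then (i) `θ(η)` agrees with `η` on `K`;
(ii) `γ_j(θ(η)) = ∑_{i∈K} η_i R̃(K)_{ij}` for `j ∈ K` and `γ_j(θ(η)) = 0` for `j ∉ K`;
(iii) `γ(θ(η)) = -(1/2)⟨η, Σ̃(K)η⟩ - ⟨μ̃(K), η⟩`. -/
theorem statement4 (d : ℕ) (hd : 1 ≤ d)
    (S : Matrix (Fin d) (Fin d) ℝ) (hS : S.IsSymm)
    (μ : Fin d → ℝ) (R : Matrix (Fin d) (Fin d) ℝ) (hR : IsUnit R)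
    (Q : Matrix (Fin d) (Fin d) ℝ) (hQ : Q = R⁻¹)
    (γ : (Fin d → ℝ) → ℝ)
    (hγ : ∀ θ, γ θ = -(1/2 : ℝ) * (θ ⬝ᵥ S.mulVec θ) - μ ⬝ᵥ θ)
    (γc : Fin d → (Fin d → ℝ) → ℝ)
    (hγc : ∀ k θ, γc k θ = (fun j => R j k) ⬝ᵥ θ)
    (K : Finset (Fin d)) (hK : K.Nonempty)
    (QKK : Matrix ↥K ↥K ℝ)
    (hQKK : QKK = Q.submatrix ((↑) : ↥K → Fin d) ((↑) : ↥K → Fin d))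
    (hQKKinv : IsUnit QKK)
    (Rt : Matrix ↥K ↥K ℝ) (hRt : Rt = QKK⁻¹)
    (St : Matrix ↥K ↥K ℝ)
    (hSt : St = QKK⁻¹ * (Q * S * Qᵀ).submatrix ((↑) : ↥K → Fin d) ((↑) : ↥K → Fin d) * (QKK⁻¹)ᵀ)
    (mt : ↥K → ℝ) (hmt : mt = QKK⁻¹ *ᵥ fun i : ↥K => (Q *ᵥ μ) ↑i)
    (η : ↥K → ℝ)
    (x : ↥K → ℝ) (hx : x = (QKK⁻¹)ᵀ *ᵥ η)
    (θη : Fin d → ℝ) (hθη : ∀ m, θη m = ∑ i : ↥K, Q ↑i m * x i) :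
    (∀ m : ↥K, θη ↑m = η m)
    ∧ (∀ j : ↥K, γc ↑j θη = ∑ i : ↥K, η i * Rt i j)
    ∧ (∀ j : Fin d, j ∉ K → γc j θη = 0)
    ∧ γ θη = -(1/2 : ℝ) * (η ⬝ᵥ St *ᵥ η) - mt ⬝ᵥ η := by
  have hdet : IsUnit QKK.det := (Matrix.isUnit_iff_isUnit_det QKK).mp hQKKinv
  have hinvmul : QKK⁻¹ * QKK = 1 := Matrix.nonsing_inv_mul QKK hdet
  have hQR : Q * R = 1 := by
    rw [hQ]; exact Matrix.nonsing_inv_mul R ((Matrix.isUnit_iff_isUnit_det R).mp hR)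
  set A : Matrix (Fin d) ↥K ℝ := Qᵀ.submatrix id ((↑) : ↥K → Fin d) with hA
  have hθA : θη = A *ᵥ x := by
    funext m
    rw [hθη]
    simp [Matrix.mulVec, dotProduct, hA]
  have part1 : ∀ m : ↥K, θη ↑m = η m := by
    intro m
    have hx' : ∀ i : ↥K, x i = ∑ k : ↥K, QKK⁻¹ k i * η k := by
      intro i; rw [hx]; simp [Matrix.mulVec, dotProduct]
    calc θη ↑m = ∑ i : ↥K, ∑ k : ↥K, η k * (QKK⁻¹ k i * QKK i m) := by
          rw [hθη]
          refine Finset.sum_congr rfl fun i _ => ?_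
          rw [hx', Finset.mul_sum]
          refine Finset.sum_congr rfl fun k _ => ?_
          rw [hQKK]; simp [Matrix.submatrix_apply]; ring
      _ = ∑ k : ↥K, η k * ∑ i : ↥K, QKK⁻¹ k i * QKK i m := by
          rw [Finset.sum_comm]
          simp [Finset.mul_sum]
      _ = ∑ k : ↥K, η k * (QKK⁻¹ * QKK) k m := by
          simp [Matrix.mul_apply]
      _ = η m := by
          rw [hinvmul]
          simp [Matrix.one_apply]
  have key2 : ∀ j : Fin d, γc j θη = ∑ i : ↥K, x i * (1 : Matrix (Fin d) (Fin d) ℝ) ↑i j := by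
    intro j
    rw [hγc]
    calc (fun m => R m j) ⬝ᵥ θη = ∑ m, ∑ i : ↥K, x i * (Q ↑i m * R m j) := by
          simp only [dotProduct]
          refine Finset.sum_congr rfl fun m _ => ?_
          rw [hθη, Finset.mul_sum]
          refine Finset.sum_congr rfl fun i _ => ?_
          ring
      _ = ∑ i : ↥K, x i * ∑ m, Q ↑i m * R m j := by
          rw [Finset.sum_comm]
          simp [Finset.mul_sum]
      _ = ∑ i : ↥K, x i * (1 : Matrix (Fin d) (Fin d) ℝ) ↑i j := by
          rw [← hQR]
          simp [Matrix.mul_apply]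
  refine ⟨part1, ?_, ?_, ?_⟩
  · intro j
    rw [key2 ↑j]
    have : ∑ i : ↥K, x i * (1 : Matrix (Fin d) (Fin d) ℝ) ↑i ↑j = x j := by
      rw [Finset.sum_eq_single j]
      · simp [Matrix.one_apply]
      · intro i _ hij
        have : (↑i : Fin d) ≠ ↑j := fun h => hij (Subtype.ext h)
        simp [Matrix.one_apply, this]
      · intro h; exact absurd (Finset.mem_univ j) h
    rw [this, hx, hRt]
    simp [Matrix.mulVec, dotProduct, mul_comm]
  · intro j hj
    rw [key2 j]
    refine Finset.sum_eq_zero fun i _ => ?_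
    have : (↑i : Fin d) ≠ j := fun h => hj (h ▸ i.2)
    simp [Matrix.one_apply, this]
  · rw [hγ, hθA]
    have h1 : (A *ᵥ x) ⬝ᵥ S *ᵥ (A *ᵥ x) = x ⬝ᵥ (Aᵀ * S * A) *ᵥ x := by
      rw [Matrix.dotProduct_mulVec, Matrix.vecMul_mulVec, ← Matrix.dotProduct_mulVec,
        Matrix.mulVec_mulVec]
    have hAtSA : Aᵀ * S * A = (Q * S * Qᵀ).submatrix ((↑) : ↥K → Fin d) ((↑) : ↥K → Fin d) := by
      ext i k
      simp [Matrix.mul_apply, hA, Finset.sum_mul]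
    have h2 : x ⬝ᵥ (Aᵀ * S * A) *ᵥ x = η ⬝ᵥ St *ᵥ η := by
      rw [hSt, ← hAtSA, hx, Matrix.mulVec_transpose, Matrix.mulVec_vecMul,
        Matrix.dotProduct_mulVec, Matrix.vecMul_vecMul, Matrix.dotProduct_mulVec,
        mul_assoc]
    have h3 : μ ⬝ᵥ (A *ᵥ x) = mt ⬝ᵥ η := by
      rw [Matrix.dotProduct_mulVec]
      have hμA : μ ᵥ* A = fun i : ↥K => (Q *ᵥ μ) ↑i := by
        funext i
        simp [Matrix.vecMul, Matrix.mulVec, dotProduct, hA, mul_comm]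
      rw [hμA, hmt, hx, Matrix.mulVec_transpose, dotProduct_comm,
        ← Matrix.dotProduct_mulVec, dotProduct_comm]
    rw [h1, h2, h3]
end

section
/- Let (K,L) be a partition of {1,…,d} into nonempty sets. Write A = R^{(K,K)}, B = R^{(L,K)}, S = Σ^{(K,K)}, T = Σ^{(L,K)}, D = diag(A), and δ = diag(S), and assume A and D are invertible. If 2S = A D⁻¹ δ + δ D⁻¹ Aᵀ and 2T = B δ D⁻¹, then B A⁻¹ S (A⁻¹)ᵀ Bᵀ - T (A⁻¹)ᵀ Bᵀ - B A⁻¹ Tᵀ = 0. -/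
open Matrix

set_option maxHeartbeats 1000000

/-- Let `(K,L)` be a partition of `{1,…,d}` into nonempty sets. With
`A = R^{(K,K)}`, `B = R^{(L,K)}`, `S = Σ^{(K,K)}`, `T = Σ^{(L,K)}`, `D = diag(A)`,
`δ = diag(S)`, `A` and `D` invertible, if `2S = A D⁻¹ δ + δ D⁻¹ Aᵀ` and `2T = B δ D⁻¹`,
then `B A⁻¹ S (A⁻¹)ᵀ Bᵀ - T (A⁻¹)ᵀ Bᵀ - B A⁻¹ Tᵀ = 0`. -/
theorem statement5 (d : ℕ) (hd : 2 ≤ d)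
    (Sig R : Matrix (Fin d) (Fin d) ℝ)
    (K L : Finset (Fin d)) (hK : K.Nonempty) (hL : L.Nonempty)
    (hdisj : Disjoint K L) (hcover : K ∪ L = Finset.univ)
    (A : Matrix ↥K ↥K ℝ) (hA : A = R.submatrix ((↑) : ↥K → Fin d) ((↑) : ↥K → Fin d))
    (B : Matrix ↥L ↥K ℝ) (hB : B = R.submatrix ((↑) : ↥L → Fin d) ((↑) : ↥K → Fin d))
    (S : Matrix ↥K ↥K ℝ) (hS : S = Sig.submatrix ((↑) : ↥K → Fin d) ((↑) : ↥K → Fin d))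
    (T : Matrix ↥L ↥K ℝ) (hT : T = Sig.submatrix ((↑) : ↥L → Fin d) ((↑) : ↥K → Fin d))
    (D : Matrix ↥K ↥K ℝ) (hD : D = Matrix.diagonal fun i => A i i)
    (δ : Matrix ↥K ↥K ℝ) (hδ : δ = Matrix.diagonal fun i => S i i)
    (hAinv : IsUnit A) (hDinv : IsUnit D)
    (hC1 : (2 : ℝ) • S = A * D⁻¹ * δ + δ * D⁻¹ * Aᵀ)
    (hC2 : (2 : ℝ) • T = B * δ * D⁻¹) :
    B * A⁻¹ * S * (A⁻¹)ᵀ * Bᵀ - T * (A⁻¹)ᵀ * Bᵀ - B * A⁻¹ * Tᵀ = 0 := by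
  have hdet : IsUnit A.det := (Matrix.isUnit_iff_isUnit_det A).mp hAinv
  have hAinvA : A⁻¹ * A = 1 := Matrix.nonsing_inv_mul A hdet
  have hAAinv : A * A⁻¹ = 1 := Matrix.mul_nonsing_inv A hdet
  have hDsym : Dᵀ = D := by rw [hD]; exact Matrix.diagonal_transpose _
  have hδsym : δᵀ = δ := by rw [hδ]; exact Matrix.diagonal_transpose _
  have hDinvT : (D⁻¹)ᵀ = D⁻¹ := by rw [Matrix.transpose_nonsing_inv, hDsym]
  have hcomm : δ * D⁻¹ = D⁻¹ * δ := by
    rw [hD, hδ, Matrix.inv_diagonal, Matrix.diagonal_mul_diagonal,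
      Matrix.diagonal_mul_diagonal]
    simp [mul_comm]
  have hTt : (2 : ℝ) • Tᵀ = D⁻¹ * (δ * Bᵀ) := by
    have := congrArg Matrix.transpose hC2
    simpa [Matrix.transpose_smul, Matrix.transpose_mul, hδsym, hDinvT,
      Matrix.mul_assoc] using this
  have key : (2 : ℝ) • (B * A⁻¹ * S * (A⁻¹)ᵀ * Bᵀ - T * (A⁻¹)ᵀ * Bᵀ - B * A⁻¹ * Tᵀ) = 0 := by
    have h1 : (2 : ℝ) • (B * A⁻¹ * S * (A⁻¹)ᵀ * Bᵀ)
        = B * A⁻¹ * ((2 : ℝ) • S) * (A⁻¹)ᵀ * Bᵀ := by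
      simp [Matrix.mul_smul, Matrix.smul_mul]
    have h2 : (2 : ℝ) • (T * (A⁻¹)ᵀ * Bᵀ) = ((2 : ℝ) • T) * (A⁻¹)ᵀ * Bᵀ := by
      simp [Matrix.smul_mul]
    have h3 : (2 : ℝ) • (B * A⁻¹ * Tᵀ) = B * A⁻¹ * ((2 : ℝ) • Tᵀ) := by
      simp [Matrix.mul_smul]
    have hAtAt : Aᵀ * (A⁻¹)ᵀ = 1 := by
      rw [← Matrix.transpose_mul, hAinvA, Matrix.transpose_one]
    rw [smul_sub, smul_sub, h1, h2, h3, hC1, hC2, hTt]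
    have expand : B * A⁻¹ * (A * D⁻¹ * δ + δ * D⁻¹ * Aᵀ) * (A⁻¹)ᵀ * Bᵀ
        = B * δ * D⁻¹ * (A⁻¹)ᵀ * Bᵀ + B * A⁻¹ * (D⁻¹ * (δ * Bᵀ)) := by
      rw [Matrix.mul_add, Matrix.add_mul, Matrix.add_mul]
      congr 1
      · calc B * A⁻¹ * (A * D⁻¹ * δ) * (A⁻¹)ᵀ * Bᵀ
            = B * (A⁻¹ * A) * (D⁻¹ * δ) * (A⁻¹)ᵀ * Bᵀ := by
              simp only [Matrix.mul_assoc]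
          _ = B * δ * D⁻¹ * (A⁻¹)ᵀ * Bᵀ := by
              rw [hAinvA, Matrix.mul_one, ← hcomm]; simp only [Matrix.mul_assoc]
      · calc B * A⁻¹ * (δ * D⁻¹ * Aᵀ) * (A⁻¹)ᵀ * Bᵀ
            = B * A⁻¹ * (δ * D⁻¹) * (Aᵀ * (A⁻¹)ᵀ) * Bᵀ := by
              simp only [Matrix.mul_assoc]
          _ = B * A⁻¹ * (D⁻¹ * (δ * Bᵀ)) := by
              rw [hAtAt, Matrix.mul_one, Matrix.mul_assoc (B * A⁻¹), hcomm]
              simp only [Matrix.mul_assoc]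
    rw [expand]; abel
  have h2ne : (2 : ℝ) ≠ 0 := two_ne_zero
  exact (smul_eq_zero.mp key).resolve_left h2ne
end

section
/- Let (K,L) be a partition of {1,…,d} into nonempty sets. Assume Σ is symmetric, R^{(K,L)} = 0, R^{(K,K)} is invertible, and R_{ii} ≠ 0 for all i ∈ K. Define μ̃(L) = μ^L - R^{(L,K)}(R^{(K,K)})⁻¹ μ^K and Σ̃(L) = Σ^{(L,L)} + R^{(L,K)}(R^{(K,K)})⁻¹ Σ^{(K,K)} ((R^{(K,K)})⁻¹)ᵀ (R^{(L,K)})ᵀ - Σ^{(L,K)} ((R^{(K,K)})⁻¹)ᵀ (R^{(L,K)})ᵀ - R^{(L,K)}(R^{(K,K)})⁻¹ (Σ^{(L,K)})ᵀ. Then the identity γ(θ) = -( Σ_{i∈K} ( (1/2)(Σ_{ii}/R_{ii}) θ_i + ((R^{(K,K)})⁻¹ μ^K)_i ) γ_i(θ) + (1/2) Σ_{i,j∈L} θ_i θ_j [Σ̃(L)]_{ij} + Σ_{i∈L} θ_i [μ̃(L)]_i ) holds for all θ ∈ ℝ^d if and only if both (C1): 2Σ^{(K,K)} = R^{(K,K)}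 diag(R^{(K,K)})⁻¹ diag(Σ^{(K,K)}) + diag(Σ^{(K,K)}) diag(R^{(K,K)})⁻¹ (R^{(K,K)})ᵀ, and (C2): 2Σ^{(L,K)} = R^{(L,K)} diag(Σ^{(K,K)}) diag(R^{(K,K)})⁻¹ hold. -/
open Matrix

lemma sum_ite_subtype {α : Type*} [Fintype α] [DecidableEq α] (s : Finset α) (g : α → ℝ) :
    ∑ i : α, (if i ∈ s then g i else 0) = ∑ i : ↥s, g ↑i := by
  rw [Finset.sum_coe_sort, Finset.sum_ite_mem, Finset.univ_inter]

lemma sum_dite_subtype {α : Type*} [Fintype α] [DecidableEq α] (s : Finset α) (g : ↥s → ℝ) :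
    ∑ i : α, (if h : i ∈ s then g ⟨i, h⟩ else 0) = ∑ i : ↥s, g i := by
  rw [show ∑ i : ↥s, g i = ∑ i ∈ s.attach, g i from by rw [Finset.univ_eq_attach]]
  rw [← Finset.sum_subset (Finset.subset_univ s) (by intro x _ hx; simp [hx])]
  rw [← Finset.sum_attach s (fun i => if h : i ∈ s then g ⟨i, h⟩ else 0)]
  exact Finset.sum_congr rfl fun x _ => by rw [dif_pos x.2]

lemma quad_zero_iff {n : Type*} [Fintype n] [DecidableEq n] (Q : n → n → ℝ) :
    (∀ θ : n → ℝ, ∑ i, ∑ j, θ i * θ j * Q i j = 0) ↔ ∀ i j, Q i j + Q j i = 0 := by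
  constructor
  · intro h i j
    have hdiag : ∀ k, Q k k = 0 := by
      intro k
      have := h (fun l => if l = k then 1 else 0)
      simpa [ite_mul, mul_ite, Finset.sum_ite_eq'] using this
    by_cases hij : i = j
    · subst hij; rw [hdiag]; ring
    · have := h (fun l => (if l = i then 1 else 0) + (if l = j then 1 else 0))
      simp only [add_mul, mul_add, ite_mul, mul_ite, one_mul, mul_one, zero_mul, mul_zero,
        Finset.sum_add_distrib, Finset.sum_ite_eq', Finset.mem_univ, if_true, zero_add, add_zero,
        if_neg hij, if_neg (Ne.symm hij)] at this
      simp only [hdiag] at this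
      linarith
  · intro h θ
    have h2 : (2:ℝ) * ∑ i, ∑ j, θ i * θ j * Q i j = 0 := by
      rw [two_mul]
      nth_rewrite 2 [Finset.sum_comm]
      simp only [← Finset.sum_add_distrib]
      have e : ∀ i j, θ i * θ j * Q i j + θ j * θ i * Q j i = θ i * θ j * (Q i j + Q j i) := by
        intro i j; ring
      rw [Finset.sum_congr rfl fun i _ => Finset.sum_congr rfl fun j _ => by rw [e, h, mul_zero]]
      simp
    linarith

/-- With `(K,L)` a nonempty partition of `{1,…,d}`, `Σ` symmetric,
`R^{(K,L)} = 0`, `A = R^{(K,K)}` invertible and `R_{ii} ≠ 0` on `K`, and with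
`μ̃(L)`, `Σ̃(L)` as defined, the polynomial identity
`γ(θ) = -( ∑_{i∈K} ((1/2)(Σ_{ii}/R_{ii})θ_i + ((R^{(K,K)})⁻¹μ^K)_i) γ_i(θ)
+ (1/2)∑_{i,j∈L} θ_iθ_j Σ̃(L)_{ij} + ∑_{i∈L} θ_i μ̃(L)_i )` holds for all `θ`
iff both the skew symmetry condition (C1) on the `K`-block and the cross condition
(C2) hold. -/
theorem statement6 (d : ℕ) (hd : 2 ≤ d)
    (S : Matrix (Fin d) (Fin d) ℝ) (hSsymm : S.IsSymm)
    (μ : Fin d → ℝ) (R : Matrix (Fin d) (Fin d) ℝ)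
    (γ : (Fin d → ℝ) → ℝ)
    (hγ : ∀ θ, γ θ = -(1/2 : ℝ) * (θ ⬝ᵥ S.mulVec θ) - μ ⬝ᵥ θ)
    (γc : Fin d → (Fin d → ℝ) → ℝ)
    (hγc : ∀ k θ, γc k θ = (fun j => R j k) ⬝ᵥ θ)
    (K L : Finset (Fin d)) (hK : K.Nonempty) (hL : L.Nonempty)
    (hdisj : Disjoint K L) (hcover : K ∪ L = Finset.univ)
    (hRKL : ∀ i ∈ K, ∀ j ∈ L, R i j = 0)
    (A : Matrix ↥K ↥K ℝ) (hA : A = R.submatrix ((↑) : ↥K → Fin d) ((↑) : ↥K → Fin d))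
    (hAinv : IsUnit A)
    (hRdiag : ∀ i ∈ K, R i i ≠ 0)
    (B : Matrix ↥L ↥K ℝ) (hB : B = R.submatrix ((↑) : ↥L → Fin d) ((↑) : ↥K → Fin d))
    (SKK : Matrix ↥K ↥K ℝ) (hSKK : SKK = S.submatrix ((↑) : ↥K → Fin d) ((↑) : ↥K → Fin d))
    (SLK : Matrix ↥L ↥K ℝ) (hSLK : SLK = S.submatrix ((↑) : ↥L → Fin d) ((↑) : ↥K → Fin d))
    (SLL : Matrix ↥L ↥L ℝ) (hSLL : SLL = S.submatrix ((↑) : ↥L → Fin d) ((↑) : ↥L → Fin d))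
    (μK : ↥K → ℝ) (hμK : μK = fun i : ↥K => μ ↑i)
    (μL : ↥L → ℝ) (hμL : μL = fun i : ↥L => μ ↑i)
    (mt : ↥L → ℝ) (hmt : mt = μL - B *ᵥ (A⁻¹ *ᵥ μK))
    (St : Matrix ↥L ↥L ℝ)
    (hSt : St = SLL + B * A⁻¹ * SKK * (A⁻¹)ᵀ * Bᵀ - SLK * (A⁻¹)ᵀ * Bᵀ - B * A⁻¹ * SLKᵀ) :
    (∀ θ : Fin d → ℝ,
      γ θ = -((∑ i : ↥K, ((1/2 : ℝ) * (S ↑i ↑i / R ↑i ↑i) * θ ↑i + (A⁻¹ *ᵥ μK) i) * γc ↑i θ)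
        + (1/2 : ℝ) * (∑ i : ↥L, ∑ j : ↥L, θ ↑i * θ ↑j * St i j)
        + ∑ i : ↥L, θ ↑i * mt i))
    ↔ ((2 : ℝ) • SKK
          = A * (Matrix.diagonal fun i => A i i)⁻¹ * (Matrix.diagonal fun i => SKK i i)
            + (Matrix.diagonal fun i => SKK i i) * (Matrix.diagonal fun i => A i i)⁻¹ * Aᵀ
        ∧ (2 : ℝ) • SLK
          = B * (Matrix.diagonal fun i => SKK i i) * (Matrix.diagonal fun i => A i i)⁻¹) := by
  classical
  have hmem : ∀ i : Fin d, i ∈ K ∨ i ∈ L := fun i =>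
    Finset.mem_union.mp (hcover ▸ Finset.mem_univ i)
  have hnKL : ∀ i ∈ K, i ∉ L := fun i hi hl => Finset.disjoint_left.mp hdisj hi hl
  have hnLK : ∀ i ∈ L, i ∉ K := fun i hi hk => Finset.disjoint_left.mp hdisj hk hi
  have hdetA : IsUnit A.det := (Matrix.isUnit_iff_isUnit_det A).mp hAinv
  have hNA : A⁻¹ * A = 1 := Matrix.nonsing_inv_mul A hdetA
  have hAN : A * A⁻¹ = 1 := Matrix.mul_nonsing_inv A hdetA
  have hAdiag : ∀ i : ↥K, A i i ≠ 0 := fun i => by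
    rw [hA]; exact hRdiag i i.2
  have hdAi : (Matrix.diagonal fun i : ↥K => A i i)⁻¹
      = Matrix.diagonal (fun i : ↥K => (A i i)⁻¹) := by
    apply Matrix.inv_eq_right_inv
    rw [Matrix.diagonal_mul_diagonal]
    rw [show (fun i : ↥K => A i i * (A i i)⁻¹) = fun _ => 1 from
      funext fun i => mul_inv_cancel₀ (hAdiag i)]
    exact Matrix.diagonal_one
  set ν : ↥K → ℝ := A⁻¹ *ᵥ μK with hν
  set Q : Fin d → Fin d → ℝ := fun i j =>
    -(1/2 : ℝ) * S i j + (if i ∈ K then (1/2 : ℝ) * (S i i / R i i) * R j i else 0)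
      + (1/2 : ℝ) * (if h : i ∈ L then (if h' : j ∈ L then St ⟨i, h⟩ ⟨j, h'⟩ else 0) else 0)
    with hQ
  -- Step 1: the identity is equivalent to the vanishing of the quadratic form of Q
  have step1 : (∀ θ : Fin d → ℝ,
      γ θ = -((∑ i : ↥K, ((1/2 : ℝ) * (S ↑i ↑i / R ↑i ↑i) * θ ↑i + ν i) * γc ↑i θ)
        + (1/2 : ℝ) * (∑ i : ↥L, ∑ j : ↥L, θ ↑i * θ ↑j * St i j)
        + ∑ i : ↥L, θ ↑i * mt i))
      ↔ (∀ θ : Fin d → ℝ, ∑ i, ∑ j, θ i * θ j * Q i j = 0) := by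
    have hv : ∀ jj : Fin d,
        (∑ i : ↥K, ν i * R jj ↑i) + (if h : jj ∈ L then mt ⟨jj, h⟩ else 0) - μ jj = 0 := by
      intro jj
      rcases hmem jj with hj | hj
      · rw [dif_neg (hnKL jj hj)]
        have e : ∑ i : ↥K, ν i * R jj ↑i = (A *ᵥ ν) ⟨jj, hj⟩ := by
          simp [Matrix.mulVec, dotProduct, hA, mul_comm]
        rw [e, hν, Matrix.mulVec_mulVec, hAN, Matrix.one_mulVec]
        simp [hμK]
      · rw [dif_pos hj]
        have e : ∑ i : ↥K, ν i * R jj ↑i = (B *ᵥ ν) ⟨jj, hj⟩ := by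
          simp [Matrix.mulVec, dotProduct, hB, mul_comm]
        rw [e, hmt]
        simp [hμL]
    have key : ∀ θ : Fin d → ℝ,
        γ θ + ((∑ i : ↥K, ((1/2 : ℝ) * (S ↑i ↑i / R ↑i ↑i) * θ ↑i + ν i) * γc ↑i θ)
          + (1/2 : ℝ) * (∑ i : ↥L, ∑ j : ↥L, θ ↑i * θ ↑j * St i j)
          + ∑ i : ↥L, θ ↑i * mt i)
        = ∑ i, ∑ j, θ i * θ j * Q i j := by
      intro θ
      have hsplit : ∑ i, ∑ j, θ i * θ j * Q i j
          = (∑ i, ∑ j, θ i * θ j * (-(1/2 : ℝ) * S i j))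
            + (∑ i, ∑ j, θ i * θ j
                * (if i ∈ K then (1/2 : ℝ) * (S i i / R i i) * R j i else 0))
            + (∑ i, ∑ j, θ i * θ j * ((1/2 : ℝ)
                * (if h : i ∈ L then (if h' : j ∈ L then St ⟨i, h⟩ ⟨j, h'⟩ else 0) else 0))) := by
        simp only [hQ, mul_add, Finset.sum_add_distrib]
      have E1 : ∑ i, ∑ j, θ i * θ j * (-(1/2 : ℝ) * S i j)
          = -(1/2 : ℝ) * (θ ⬝ᵥ S.mulVec θ) := by
        simp only [dotProduct, Matrix.mulVec, Finset.mul_sum]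
        exact Finset.sum_congr rfl fun i _ => Finset.sum_congr rfl fun j _ => by ring
      have E2 : ∑ i, ∑ j, θ i * θ j * (if i ∈ K then (1/2 : ℝ) * (S i i / R i i) * R j i else 0)
          = ∑ i : ↥K, (1/2 : ℝ) * (S ↑i ↑i / R ↑i ↑i) * θ ↑i * γc ↑i θ := by
        rw [← sum_ite_subtype K (fun i => (1/2 : ℝ) * (S i i / R i i) * θ i * γc i θ)]
        apply Finset.sum_congr rfl
        intro i _
        by_cases hi : i ∈ K
        · rw [if_pos hi]
          rw [hγc]
          simp only [dotProduct, Finset.mul_sum]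
          exact Finset.sum_congr rfl fun j _ => by rw [if_pos hi]; ring
        · simp [hi]
      have E3 : ∑ i, ∑ j, θ i * θ j * ((1/2 : ℝ)
            * (if h : i ∈ L then (if h' : j ∈ L then St ⟨i, h⟩ ⟨j, h'⟩ else 0) else 0))
          = (1/2 : ℝ) * ∑ i : ↥L, ∑ j : ↥L, θ ↑i * θ ↑j * St i j := by
        rw [Finset.mul_sum]
        rw [← sum_dite_subtype L
          (fun i : ↥L => (1/2 : ℝ) * ∑ j : ↥L, θ ↑i * θ ↑j * St i j)]
        apply Finset.sum_congr rfl
        intro i _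
        by_cases hi : i ∈ L
        · rw [dif_pos hi, Finset.mul_sum]
          rw [← sum_dite_subtype L
            (fun j : ↥L => (1/2 : ℝ) * (θ i * θ ↑j * St ⟨i, hi⟩ j))]
          apply Finset.sum_congr rfl
          intro j _
          by_cases hj : j ∈ L
          · rw [dif_pos hj, dif_pos hi, dif_pos hj]; ring
          · rw [dif_neg hj, dif_pos hi, dif_neg hj]; ring
        · rw [dif_neg hi]
          simp [dif_neg hi]
      have hlin : (∑ i : ↥K, ν i * γc ↑i θ) + (∑ i : ↥L, θ ↑i * mt i) - μ ⬝ᵥ θ = 0 := by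
        have e1 : (∑ i : ↥K, ν i * γc ↑i θ)
            = ∑ jj : Fin d, θ jj * (∑ i : ↥K, ν i * R jj ↑i) := by
          simp only [hγc, dotProduct, Finset.mul_sum]
          rw [Finset.sum_comm]
          exact Finset.sum_congr rfl fun j _ => Finset.sum_congr rfl fun i _ => by ring
        have e2 : (∑ i : ↥L, θ ↑i * mt i)
            = ∑ jj : Fin d, θ jj * (if h : jj ∈ L then mt ⟨jj, h⟩ else 0) := by
          rw [← sum_dite_subtype L (fun i : ↥L => θ ↑i * mt i)]
          exact Finset.sum_congr rfl fun jj _ => by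
            by_cases hj : jj ∈ L
            · rw [dif_pos hj, dif_pos hj]
            · rw [dif_neg hj, dif_neg hj, mul_zero]
        have e3 : μ ⬝ᵥ θ = ∑ jj : Fin d, θ jj * μ jj := by
          simp only [dotProduct]
          exact Finset.sum_congr rfl fun jj _ => by ring
        rw [e1, e2, e3, ← Finset.sum_add_distrib, ← Finset.sum_sub_distrib]
        rw [Finset.sum_congr rfl fun jj _ => show
          θ jj * (∑ i : ↥K, ν i * R jj ↑i) + θ jj * (if h : jj ∈ L then mt ⟨jj, h⟩ else 0)
            - θ jj * μ jj
          = θ jj * ((∑ i : ↥K, ν i * R jj ↑i) + (if h : jj ∈ L then mt ⟨jj, h⟩ else 0) - μ jj)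
          from by ring]
        rw [Finset.sum_congr rfl fun jj _ => by rw [hv jj, mul_zero]]
        simp
      have hb : ∑ i : ↥K, ((1/2 : ℝ) * (S ↑i ↑i / R ↑i ↑i) * θ ↑i + ν i) * γc ↑i θ
          = (∑ i : ↥K, (1/2 : ℝ) * (S ↑i ↑i / R ↑i ↑i) * θ ↑i * γc ↑i θ)
            + ∑ i : ↥K, ν i * γc ↑i θ := by
        rw [← Finset.sum_add_distrib]
        exact Finset.sum_congr rfl fun i _ => by ring
      rw [hsplit, E1, E2, E3, hγ θ, hb]
      linarith [hlin]
    constructor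
    · intro h θ
      have hh := h θ
      rw [eq_neg_iff_add_eq_zero] at hh
      rw [← key θ]
      exact hh
    · intro h θ
      rw [eq_neg_iff_add_eq_zero, key θ]
      exact h θ
  -- Step 2: entrywise characterizations
  have hC1 : ((2 : ℝ) • SKK
      = A * (Matrix.diagonal fun i => A i i)⁻¹ * (Matrix.diagonal fun i => SKK i i)
        + (Matrix.diagonal fun i => SKK i i) * (Matrix.diagonal fun i => A i i)⁻¹ * Aᵀ)
      ↔ (∀ i j : ↥K, 2 * S ↑i ↑j
          = R ↑i ↑j * (R ↑j ↑j)⁻¹ * S ↑j ↑j + S ↑i ↑i * (R ↑i ↑i)⁻¹ * R ↑j ↑i) := by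
    rw [hdAi, ← Matrix.ext_iff]
    constructor <;> intro h i j <;> have hij := h i j <;>
      simp only [Matrix.add_apply, Matrix.smul_apply, smul_eq_mul,
        Matrix.diagonal_mul_diagonal, Matrix.mul_diagonal, Matrix.diagonal_mul,
        Matrix.transpose_apply, hSKK, hA, Matrix.submatrix_apply] at hij ⊢ <;>
      linarith [hij]
  have hC2 : ((2 : ℝ) • SLK
      = B * (Matrix.diagonal fun i => SKK i i) * (Matrix.diagonal fun i => A i i)⁻¹)
      ↔ (∀ (i : ↥L) (j : ↥K), 2 * S ↑i ↑j = R ↑i ↑j * S ↑j ↑j * (R ↑j ↑j)⁻¹) := by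
    rw [hdAi, ← Matrix.ext_iff]
    constructor <;> intro h i j <;> have hij := h i j <;>
      simp only [Matrix.smul_apply, smul_eq_mul, Matrix.diagonal_mul_diagonal,
        Matrix.mul_diagonal, hSLK, hB, hSKK, hA,
        Matrix.submatrix_apply] at hij ⊢ <;>
      linarith [hij]
  rw [step1, quad_zero_iff, hC1, hC2]
  -- Step 3: the final combinatorial equivalence
  constructor
  · intro h
    constructor
    · intro i j
      have hq := h ↑i ↑j
      have hs : S ↑j ↑i = S ↑i ↑j := hSsymm.apply ↑i ↑j
      simp only [hQ, if_pos i.2, if_pos j.2, dif_neg (hnKL _ i.2), dif_neg (hnKL _ j.2),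
        mul_zero, add_zero] at hq
      linear_combination (-2 : ℝ) * hq - hs
    · intro i j
      have hq := h ↑i ↑j
      have hs : S ↑j ↑i = S ↑i ↑j := hSsymm.apply ↑i ↑j
      simp only [hQ, if_pos j.2, if_neg (hnLK _ i.2), dif_pos i.2, dif_neg (hnKL _ j.2),
        mul_zero, add_zero, zero_add] at hq
      linear_combination (-2 : ℝ) * hq - hs
  · rintro ⟨hc1, hc2⟩
    have hm1 := hC1.mpr hc1
    have hm2 := hC2.mpr hc2
    rw [hdAi] at hm1 hm2
    have hT : Aᵀ * (A⁻¹)ᵀ = 1 := by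
      rw [← Matrix.transpose_mul, hNA, Matrix.transpose_one]
    have hSKKt : SKKᵀ = SKK := by
      rw [hSKK]
      ext i j
      simp only [Matrix.transpose_apply, Matrix.submatrix_apply]
      exact hSsymm.apply ↑i ↑j
    have hSLLt : SLLᵀ = SLL := by
      rw [hSLL]
      ext i j
      simp only [Matrix.transpose_apply, Matrix.submatrix_apply]
      exact hSsymm.apply ↑i ↑j
    set E : Matrix ↥K ↥K ℝ := Matrix.diagonal (fun i : ↥K => SKK i i * (A i i)⁻¹) with hEdef
    have hm1' : (2 : ℝ) • SKK = A * E + E * Aᵀ := by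
      rw [hm1]
      congr 1
      · rw [Matrix.mul_assoc, Matrix.diagonal_mul_diagonal, hEdef,
          show (fun i : ↥K => (A i i)⁻¹ * SKK i i) = fun i : ↥K => SKK i i * (A i i)⁻¹ from
            funext fun i => mul_comm _ _]
      · rw [Matrix.diagonal_mul_diagonal, hEdef]
    have hm2' : (2 : ℝ) • SLK = B * E := by
      rw [hm2, Matrix.mul_assoc, Matrix.diagonal_mul_diagonal, hEdef]
    have hEt : Eᵀ = E := Matrix.diagonal_transpose _
    have hkey : B * A⁻¹ * SKK * (A⁻¹)ᵀ * Bᵀ = SLK * (A⁻¹)ᵀ * Bᵀ + B * A⁻¹ * SLKᵀ := by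
      have h2 : (2 : ℝ) • (B * A⁻¹ * SKK * (A⁻¹)ᵀ * Bᵀ)
          = (2 : ℝ) • (SLK * (A⁻¹)ᵀ * Bᵀ + B * A⁻¹ * SLKᵀ) := by
        have l1 : (2 : ℝ) • (B * A⁻¹ * SKK * (A⁻¹)ᵀ * Bᵀ)
            = B * A⁻¹ * ((2 : ℝ) • SKK) * (A⁻¹)ᵀ * Bᵀ := by
          simp [Matrix.smul_mul, Matrix.mul_smul]
        have r1 : (2 : ℝ) • (SLK * (A⁻¹)ᵀ * Bᵀ + B * A⁻¹ * SLKᵀ)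
            = ((2 : ℝ) • SLK) * (A⁻¹)ᵀ * Bᵀ + B * A⁻¹ * ((2 : ℝ) • SLK)ᵀ := by
          simp [Matrix.smul_mul, Matrix.mul_smul, Matrix.transpose_smul, smul_add]
        rw [l1, r1, hm1', hm2']
        have t1 : B * A⁻¹ * (A * E) = B * E := by
          rw [Matrix.mul_assoc B, ← Matrix.mul_assoc A⁻¹, hNA, Matrix.one_mul]
        have t2 : B * A⁻¹ * (E * Aᵀ) * (A⁻¹)ᵀ = B * A⁻¹ * E := by
          rw [← Matrix.mul_assoc (B * A⁻¹) E Aᵀ, Matrix.mul_assoc (B * A⁻¹ * E) Aᵀ (A⁻¹)ᵀ,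
            hT, Matrix.mul_one]
        have t3 : (B * E)ᵀ = E * Bᵀ := by rw [Matrix.transpose_mul, hEt]
        rw [Matrix.mul_add, Matrix.add_mul, Matrix.add_mul, t1, t2, t3,
          ← Matrix.mul_assoc (B * A⁻¹) E Bᵀ]
      exact smul_right_injective (Matrix ↥L ↥L ℝ) (by norm_num : (2:ℝ) ≠ 0) h2
    have hLLmat : St + Stᵀ = (2 : ℝ) • SLL := by
      rw [hSt]
      have htr : (SLL + B * A⁻¹ * SKK * (A⁻¹)ᵀ * Bᵀ - SLK * (A⁻¹)ᵀ * Bᵀ - B * A⁻¹ * SLKᵀ)ᵀ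
          = SLL + B * A⁻¹ * SKK * (A⁻¹)ᵀ * Bᵀ - B * A⁻¹ * SLKᵀ - SLK * (A⁻¹)ᵀ * Bᵀ := by
        simp only [Matrix.transpose_sub, Matrix.transpose_add, Matrix.transpose_mul,
          Matrix.transpose_transpose, hSLLt, hSKKt]
        simp only [← Matrix.mul_assoc]
      rw [htr, hkey, two_smul]
      abel
    intro i j
    rcases hmem i with hi | hi <;> rcases hmem j with hj | hj
    · have h1 := hc1 ⟨i, hi⟩ ⟨j, hj⟩
      have hs : S j i = S i j := hSsymm.apply i j
      simp only [hQ, if_pos hi, if_pos hj, dif_neg (hnKL _ hi), dif_neg (hnKL _ hj),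
        mul_zero, add_zero]
      linear_combination (-(1/2) : ℝ) * h1 - (1/2 : ℝ) * hs
    · have h2 := hc2 ⟨j, hj⟩ ⟨i, hi⟩
      have hs : S j i = S i j := hSsymm.apply i j
      simp only [hQ, if_pos hi, if_neg (hnLK _ hj), dif_neg (hnKL _ hi), dif_pos hj,
        mul_zero, add_zero, zero_add]
      linear_combination (-(1/2) : ℝ) * h2 + (1/2 : ℝ) * hs
    · have h2 := hc2 ⟨i, hi⟩ ⟨j, hj⟩
      have hs : S j i = S i j := hSsymm.apply i j
      simp only [hQ, if_pos hj, if_neg (hnLK _ hi), dif_neg (hnKL _ hj), dif_pos hi,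
        mul_zero, add_zero, zero_add]
      linear_combination (-(1/2) : ℝ) * h2 - (1/2 : ℝ) * hs
    · have h3 := congr_fun (congr_fun hLLmat ⟨i, hi⟩) ⟨j, hj⟩
      simp only [Matrix.add_apply, Matrix.transpose_apply, Matrix.smul_apply, smul_eq_mul,
        hSLL, Matrix.submatrix_apply] at h3
      have hs : S j i = S i j := hSsymm.apply i j
      simp only [hQ, if_neg (hnLK _ hi), if_neg (hnLK _ hj), dif_pos hi, dif_pos hj,
        zero_add, add_zero]
      linear_combination (1/2 : ℝ) * h3 - (1/2 : ℝ) * hs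
end

section
/- Let d ≥ 2, 1 ≤ k ≤ d-1, K = {1,…,k}, and L = {k+1,…,d}. For the d-station tandem-queue data with β_0 > 0 and c_0,…,c_d > 0, the two conditions (C1): 2Σ^{(K,K)} = R^{(K,K)} diag(R^{(K,K)})⁻¹ diag(Σ^{(K,K)}) + diag(Σ^{(K,K)}) diag(R^{(K,K)})⁻¹ (R^{(K,K)})ᵀ, and (C2): 2Σ^{(L,K)} = R^{(L,K)} diag(Σ^{(K,K)}) diag(R^{(K,K)})⁻¹, hold simultaneously if and only if c_0 = c_1 = ⋯ = c_k. -/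
open Matrix

set_option maxHeartbeats 1000000

/-- For the `d`-station tandem-queue data (0-based coordinates: station
`i ∈ Fin d` corresponds to paper station `i+1`), with `K = {1,…,k}` and `L = {k+1,…,d}`
(i.e. `K = {i : i < k}`, `L = {i : k ≤ i}` in 0-based coordinates), `β_0 > 0` and all
`c_m > 0`, the skew symmetry condition (C1) on the `K`-block and the cross condition
(C2) hold simultaneously iff `c_0 = c_1 = ⋯ = c_k`. -/
theorem statement9 (d k : ℕ) (hd : 2 ≤ d) (hk1 : 1 ≤ k) (hk2 : k ≤ d - 1)
    (β0 : ℝ) (hβ0 : 0 < β0)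
    (c : ℕ → ℝ) (hc : ∀ m, m ≤ d → 0 < c m)
    (R : Matrix (Fin d) (Fin d) ℝ)
    (hR : ∀ i j : Fin d, R i j =
      if i = j then 1 else if (j : ℕ) + 1 = (i : ℕ) then -1 else 0)
    (S : Matrix (Fin d) (Fin d) ℝ)
    (hS : ∀ i j : Fin d, S i j =
      if i = j then β0 * ((c (i : ℕ)) ^ 2 + (c ((i : ℕ) + 1)) ^ 2)
      else if (j : ℕ) + 1 = (i : ℕ) then -(β0 * (c (i : ℕ)) ^ 2)
      else if (i : ℕ) + 1 = (j : ℕ) then -(β0 * (c ((i : ℕ) + 1)) ^ 2)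
      else 0)
    (K L : Finset (Fin d))
    (hK : K = Finset.univ.filter fun i : Fin d => (i : ℕ) < k)
    (hL : L = Finset.univ.filter fun i : Fin d => k ≤ (i : ℕ))
    (RKK : Matrix ↥K ↥K ℝ) (hRKK : RKK = R.submatrix ((↑) : ↥K → Fin d) ((↑) : ↥K → Fin d))
    (RLK : Matrix ↥L ↥K ℝ) (hRLK : RLK = R.submatrix ((↑) : ↥L → Fin d) ((↑) : ↥K → Fin d))
    (SKK : Matrix ↥K ↥K ℝ) (hSKK : SKK = S.submatrix ((↑) : ↥K → Fin d) ((↑) : ↥K → Fin d))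
    (SLK : Matrix ↥L ↥K ℝ) (hSLK : SLK = S.submatrix ((↑) : ↥L → Fin d) ((↑) : ↥K → Fin d)) :
    ((2 : ℝ) • SKK
        = RKK * (Matrix.diagonal fun i => RKK i i)⁻¹ * (Matrix.diagonal fun i => SKK i i)
          + (Matrix.diagonal fun i => SKK i i) * (Matrix.diagonal fun i => RKK i i)⁻¹ * RKKᵀ
      ∧ (2 : ℝ) • SLK
        = RLK * (Matrix.diagonal fun i => SKK i i) * (Matrix.diagonal fun i => RKK i i)⁻¹)
    ↔ (∀ m : ℕ, m ≤ k → c m = c 0) := by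

  have hkd : k < d := by omega
  have memK : ∀ i : Fin d, i ∈ K ↔ (i : ℕ) < k := by simp [hK]
  have memL : ∀ i : Fin d, i ∈ L ↔ k ≤ (i : ℕ) := by simp [hL]
  have hD1 : (Matrix.diagonal fun i : ↥K => RKK i i) = 1 := by
    ext i j
    by_cases h : i = j
    · subst h
      simp [Matrix.diagonal_apply_eq, Matrix.one_apply_eq, hRKK, hR]
    · simp [Matrix.diagonal_apply_ne _ h, Matrix.one_apply_ne h]
  rw [hD1, inv_one, Matrix.mul_one, Matrix.mul_one, Matrix.mul_one]
  constructor
  · rintro ⟨h1, h2⟩ m hm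
    induction m with
    | zero => rfl
    | succ n ih =>
      have hcn : c n = c 0 := ih (by omega)
      suffices hs : c (n + 1) = c n by rw [hs, hcn]
      have hpos1 : 0 < c (n + 1) := hc _ (by omega)
      have hpos0 : 0 < c n := hc _ (by omega)
      by_cases hlt : n + 1 < k
      · have hiK : (⟨n + 1, by omega⟩ : Fin d) ∈ K := (memK _).2 (by simpa using hlt)
        have hjK : (⟨n, by omega⟩ : Fin d) ∈ K := (memK _).2 (by simp; omega)
        have h := Matrix.ext_iff.mpr h1 ⟨⟨n + 1, by omega⟩, hiK⟩ ⟨⟨n, by omega⟩, hjK⟩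
        simp only [Matrix.smul_apply, Matrix.add_apply, Matrix.mul_diagonal,
          Matrix.diagonal_mul, Matrix.transpose_apply, smul_eq_mul,
          hRKK, hSKK, Matrix.submatrix_apply, hR, hS] at h
        simp only [Fin.mk.injEq] at h
        split_ifs at h <;> try omega
        all_goals
          have h' : β0 * c (n + 1) ^ 2 = β0 * c n ^ 2 := by linarith [h]
          have hsq : c (n + 1) ^ 2 = c n ^ 2 := mul_left_cancel₀ (ne_of_gt hβ0) h'
          nlinarith [hsq, hpos1, hpos0]
      · have hnk : n + 1 = k := by omega
        have hiL : (⟨n + 1, by omega⟩ : Fin d) ∈ L := (memL _).2 (by simp; omega)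
        have hjK : (⟨n, by omega⟩ : Fin d) ∈ K := (memK _).2 (by simp; omega)
        have h := Matrix.ext_iff.mpr h2 ⟨⟨n + 1, by omega⟩, hiL⟩ ⟨⟨n, by omega⟩, hjK⟩
        simp only [Matrix.smul_apply, Matrix.mul_diagonal, smul_eq_mul,
          hRLK, hSKK, hSLK, Matrix.submatrix_apply, hR, hS] at h
        simp only [Fin.mk.injEq] at h
        split_ifs at h <;> try omega
        all_goals
          have h' : β0 * c (n + 1) ^ 2 = β0 * c n ^ 2 := by linarith [h]
          have hsq : c (n + 1) ^ 2 = c n ^ 2 := mul_left_cancel₀ (ne_of_gt hβ0) h'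
          nlinarith [hsq, hpos1, hpos0]
  · intro hcc
    constructor
    · ext i j
      have hik : (↑↑i : ℕ) < k := (memK _).1 i.2
      have hjk : (↑↑j : ℕ) < k := (memK _).1 j.2
      have e1 : c (↑↑i : ℕ) = c 0 := hcc _ (by omega)
      have e2 : c ((↑↑i : ℕ) + 1) = c 0 := hcc _ (by omega)
      have e3 : c (↑↑j : ℕ) = c 0 := hcc _ (by omega)
      have e4 : c ((↑↑j : ℕ) + 1) = c 0 := hcc _ (by omega)
      simp only [Matrix.smul_apply, Matrix.add_apply, Matrix.mul_diagonal,
        Matrix.diagonal_mul, Matrix.transpose_apply, smul_eq_mul,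
        hRKK, hSKK, Matrix.submatrix_apply, hR, hS, Fin.ext_iff]
      rw [e1, e2, e3, e4]
      split_ifs <;> first | ring1 | omega | (exfalso; omega)
    · ext i j
      have hik : k ≤ (↑↑i : ℕ) := (memL _).1 i.2
      have hjk : (↑↑j : ℕ) < k := (memK _).1 j.2
      have e3 : c (↑↑j : ℕ) = c 0 := hcc _ (by omega)
      simp only [Matrix.smul_apply, Matrix.mul_diagonal, smul_eq_mul,
        hRLK, hSKK, hSLK, Matrix.submatrix_apply, hR, hS, Fin.ext_iff]
      by_cases hji : (↑↑j : ℕ) + 1 = (↑↑i : ℕ)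
      · have e1 : c (↑↑i : ℕ) = c 0 := hcc _ (by omega)
        have e4 : c ((↑↑j : ℕ) + 1) = c 0 := by rw [hji]; exact e1
        rw [e1, e3, e4]
        split_ifs <;> first | ring1 | omega | (exfalso; omega)
      · split_ifs <;> first | ring1 | omega | (exfalso; omega)
end

section
/- Let d = 2 with the two-station tandem-queue data for parameters β_0, β_1, β_2 > 0 and c_0, c_1, c_2 > 0. Define α = -2 diag(Σ)⁻¹ diag(R) R⁻¹ μ and, with Q = R⁻¹ and Δ_i = -2⟨μ, v^{(i)}⟩/⟨v^{(i)}, Σ v^{(i)}⟩ where v^{(i)} is the i-th column of Qᵀ, define λ_i = Δ_i Q_{ii}. Then α_1 = λ_1 = 2(β_1 - β_0)/(β_0(c_0² + c_1²)), α_2 = 2(β_2 - β_0)/(β_0(c_1² + c_2²)), and λ_2 = 2(β_2 - β_0)/(β_0(c_0² + c_2²)). In particular, if β_0 < β_2, then α_2 = λ_2 if and only if c_0 = c_1. -/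
/-!
Because `Q = R⁻¹ = !![1, 0; 1, 1]` has unit diagonal, both `α i` and `lam i` are `-2 (Q μ) i`
divided by a variance under `S`: `α` uses `S i i`, `lam` uses `⟨v i, S v i⟩`. The row `v 0` is the
first unit vector, so `α 0 = lam 0`; the row `v 1 = (1, 1)` gives `⟨v 1, S v 1⟩ = β₀(c₀² + c₂²)`,
which equals `S 1 1 = β₀(c₁² + c₂²)` exactly when `c₀ = c₁`.
-/

open Matrix

lemma inv_lowerUnitriangular {K : Type*} [CommRing K] (a : K) :
    (!![1, 0; a, 1] : Matrix (Fin 2) (Fin 2) K)⁻¹ = !![1, 0; -a, 1] := by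
  apply inv_eq_right_inv
  ext i j
  fin_cases i <;> fin_cases j <;> simp

lemma inv_diagonal_of_ne_zero {n K : Type*} [Fintype n] [DecidableEq n] [Field K] {s : n → K}
    (hs : ∀ i, s i ≠ 0) : (diagonal s)⁻¹ = diagonal s⁻¹ := by
  apply inv_eq_right_inv
  rw [diagonal_mul_diagonal, ← diagonal_one]
  exact congrArg diagonal (funext fun i => mul_inv_cancel₀ (hs i))

lemma diagonal_inv_mul_diagonal_mul_mulVec_apply {n K : Type*} [Fintype n] [DecidableEq n]
    [Field K] {s : n → K} (hs : ∀ i, s i ≠ 0) (r : n → K) (Q : Matrix n n K) (μ : n → K)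
    (i : n) : (((diagonal s)⁻¹ * diagonal r * Q) *ᵥ μ) i = r i / s i * (Q *ᵥ μ) i := by
  rw [inv_diagonal_of_ne_zero hs, ← mulVec_mulVec, ← mulVec_mulVec, mulVec_diagonal,
    mulVec_diagonal, Pi.inv_apply, div_eq_inv_mul, mul_assoc]

lemma div_mul_sq_add_sq_eq_iff {a b x y z : ℝ} (ha : a ≠ 0) (hb : b ≠ 0) (hx : 0 ≤ x)
    (hy : 0 ≤ y) :
    a / (b * (y ^ 2 + z ^ 2)) = a / (b * (x ^ 2 + z ^ 2)) ↔ x = y := by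
  rw [div_eq_mul_inv, div_eq_mul_inv, mul_right_inj' ha, _root_.inv_inj, mul_right_inj' hb,
    add_left_inj, pow_left_inj₀ hy hx two_ne_zero, eq_comm]

theorem statement11_general (β0 β1 β2 c0 c1 c2 : ℝ)
    (hβ0 : 0 < β0)
    (hc0 : 0 < c0) (hc1 : 0 < c1)
    (R : Matrix (Fin 2) (Fin 2) ℝ) (hR : R = !![1, 0; -1, 1])
    (S : Matrix (Fin 2) (Fin 2) ℝ)
    (hS : S = !![β0 * (c0 ^ 2 + c1 ^ 2), -(β0 * c1 ^ 2);
                 -(β0 * c1 ^ 2), β0 * (c1 ^ 2 + c2 ^ 2)])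
    (μ : Fin 2 → ℝ) (hμ : μ = ![β0 - β1, β1 - β2])
    (Q : Matrix (Fin 2) (Fin 2) ℝ) (hQ : Q = R⁻¹)
    (α : Fin 2 → ℝ)
    (hα : α = (-2 : ℝ) •
      (((Matrix.diagonal fun i => S i i)⁻¹ * (Matrix.diagonal fun i => R i i) * R⁻¹) *ᵥ μ))
    (v : Fin 2 → Fin 2 → ℝ) (hv : ∀ i j, v i j = Q i j)
    (Δ : Fin 2 → ℝ)
    (hΔ : ∀ i, Δ i = -2 * (μ ⬝ᵥ v i) / (v i ⬝ᵥ S.mulVec (v i)))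
    (lam : Fin 2 → ℝ) (hlam : ∀ i, lam i = Δ i * Q i i) :
    α 0 = lam 0
    ∧ α 0 = 2 * (β1 - β0) / (β0 * (c0 ^ 2 + c1 ^ 2))
    ∧ α 1 = 2 * (β2 - β0) / (β0 * (c1 ^ 2 + c2 ^ 2))
    ∧ lam 1 = 2 * (β2 - β0) / (β0 * (c0 ^ 2 + c2 ^ 2))
    ∧ (β0 < β2 → (α 1 = lam 1 ↔ c0 = c1)) := by
  have hQ' : Q = !![1, 0; 1, 1] := by rw [hQ, hR, inv_lowerUnitriangular, neg_neg]
  have hQμ : Q *ᵥ μ = ![β0 - β1, β0 - β2] := by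
    ext i; fin_cases i <;> simp [hQ', hμ]
  have hS00 : S 0 0 = β0 * (c0 ^ 2 + c1 ^ 2) := by simp [hS]
  have hS11 : S 1 1 = β0 * (c1 ^ 2 + c2 ^ 2) := by simp [hS]
  have hvar0 : Q 0 ⬝ᵥ S *ᵥ Q 0 = β0 * (c0 ^ 2 + c1 ^ 2) := by simp [hQ', hS, dotProduct]
  have hvar1 : Q 1 ⬝ᵥ S *ᵥ Q 1 = β0 * (c0 ^ 2 + c2 ^ 2) := by
    simp only [hQ', hS, dotProduct, Fin.sum_univ_two, cons_mulVec, empty_mulVec, of_apply,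
      cons_val', cons_val_zero, cons_val_one, cons_val_fin_one, one_mul, mul_one]
    ring
  have hRdiag : ∀ i, R i i = 1 := Fin.forall_fin_two.mpr ⟨by simp [hR], by simp [hR]⟩
  have hQdiag : ∀ i, Q i i = 1 := Fin.forall_fin_two.mpr ⟨by simp [hQ'], by simp [hQ']⟩
  have hSdiag : ∀ i, S i i ≠ 0 :=
    Fin.forall_fin_two.mpr ⟨by rw [hS00]; positivity, by rw [hS11]; positivity⟩
  have hα_apply (i : Fin 2) : α i = -2 * (Q *ᵥ μ) i / S i i := by
    rw [hα, Pi.smul_apply, diagonal_inv_mul_diagonal_mul_mulVec_apply hSdiag, ← hQ, hRdiag,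
      smul_eq_mul]
    ring
  have hlam_apply (i : Fin 2) : lam i = -2 * (Q *ᵥ μ) i / (Q i ⬝ᵥ S *ᵥ Q i) := by
    rw [hlam, hΔ, hQdiag, mul_one, show v = Q from funext fun i => funext (hv i),
      dotProduct_comm]
    rfl
  have hα0 : α 0 = 2 * (β1 - β0) / (β0 * (c0 ^ 2 + c1 ^ 2)) := by
    rw [hα_apply, hQμ, hS00, cons_val_zero]; ring
  have hα1 : α 1 = 2 * (β2 - β0) / (β0 * (c1 ^ 2 + c2 ^ 2)) := by
    rw [hα_apply, hQμ, hS11, cons_val_one, cons_val_zero]; ring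
  have hlam0 : lam 0 = 2 * (β1 - β0) / (β0 * (c0 ^ 2 + c1 ^ 2)) := by
    rw [hlam_apply, hQμ, hvar0, cons_val_zero]; ring
  have hlam1 : lam 1 = 2 * (β2 - β0) / (β0 * (c0 ^ 2 + c2 ^ 2)) := by
    rw [hlam_apply, hQμ, hvar1, cons_val_one, cons_val_zero]; ring
  refine ⟨hα0.trans hlam0.symm, hα0, hα1, hlam1, fun hlt => ?_⟩
  rw [hα1, hlam1]
  exact div_mul_sq_add_sq_eq_iff (by linarith) hβ0.ne' hc0.le hc1.le

/-- For the two-station tandem queue with parameters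
`β_0, β_1, β_2 > 0` and `c_0, c_1, c_2 > 0`, with
`α = -2 diag(Σ)⁻¹ diag(R) R⁻¹ μ` and `λ_i = Δ_i Q_{ii}` (where `Q = R⁻¹`), one has
`α_1 = λ_1 = 2(β_1-β_0)/(β_0(c_0²+c_1²))`, `α_2 = 2(β_2-β_0)/(β_0(c_1²+c_2²))` and
`λ_2 = 2(β_2-β_0)/(β_0(c_0²+c_2²))`; in particular if `β_0 < β_2` then
`α_2 = λ_2 ↔ c_0 = c_1`. (Coordinates are 0-based: index `0` is station 1.) -/
theorem statement11 (β0 β1 β2 c0 c1 c2 : ℝ)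
    (hβ0 : 0 < β0) (hβ1 : 0 < β1) (hβ2 : 0 < β2)
    (hc0 : 0 < c0) (hc1 : 0 < c1) (hc2 : 0 < c2)
    (R : Matrix (Fin 2) (Fin 2) ℝ) (hR : R = !![1, 0; -1, 1])
    (S : Matrix (Fin 2) (Fin 2) ℝ)
    (hS : S = !![β0 * (c0 ^ 2 + c1 ^ 2), -(β0 * c1 ^ 2);
                 -(β0 * c1 ^ 2), β0 * (c1 ^ 2 + c2 ^ 2)])
    (μ : Fin 2 → ℝ) (hμ : μ = ![β0 - β1, β1 - β2])
    (Q : Matrix (Fin 2) (Fin 2) ℝ) (hQ : Q = R⁻¹)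
    (α : Fin 2 → ℝ)
    (hα : α = (-2 : ℝ) •
      (((Matrix.diagonal fun i => S i i)⁻¹ * (Matrix.diagonal fun i => R i i) * R⁻¹) *ᵥ μ))
    (v : Fin 2 → Fin 2 → ℝ) (hv : ∀ i j, v i j = Q i j)
    (Δ : Fin 2 → ℝ)
    (hΔ : ∀ i, Δ i = -2 * (μ ⬝ᵥ v i) / (v i ⬝ᵥ S.mulVec (v i)))
    (lam : Fin 2 → ℝ) (hlam : ∀ i, lam i = Δ i * Q i i) :
    α 0 = lam 0
    ∧ α 0 = 2 * (β1 - β0) / (β0 * (c0 ^ 2 + c1 ^ 2))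
    ∧ α 1 = 2 * (β2 - β0) / (β0 * (c1 ^ 2 + c2 ^ 2))
    ∧ lam 1 = 2 * (β2 - β0) / (β0 * (c0 ^ 2 + c2 ^ 2))
    ∧ (β0 < β2 → (α 1 = lam 1 ↔ c0 = c1)) :=
  statement11_general β0 β1 β2 c0 c1 c2 hβ0 hc0 hc1 R hR S hS μ hμ Q hQ α hα v hv Δ hΔ lam hlam
end

section
/- Fix j ∈ {1,…,d} and assume Σ_{jj} > 0. Suppose (π; ν_1,…,ν_d) satisfies the basic adjoint relationship (BAR) for (Σ, μ, R). Then: (i) π({x ∈ ℝ₊^d : x_j = 0}) = 0; and (ii) for every θ ∈ ℝ^d with θ ≤ 0 componentwise, the limit lim_{t→-∞} -( (1/2) Σ_{jj} t + μ_j ) φ(θ[t]) exists and equals R_{jj} φ_j(θ), where θ[t] denotes the vector equal to θ except that its j-th coordinate is replaced by t. -/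
/-!
Along the line `θ[t] = Function.update θ j t`, BAR says that a quadratic in `t` with leading
coefficient `-Σ_jj / 2`, times `φ(θ[t])`, equals a sum of affine functions of `t` times the
boundary transforms `φ_i(θ[t])`. As `t → -∞`, dominated convergence gives
`φ(θ[t]) → ∫_{x_j = 0} e^{⟨θ,x⟩} dπ`, while `φ_i(θ[t]) → 0` for `i ≠ j` (as `ν_i` does not
charge `{x_j = 0}`) and `φ_j(θ[t]) = φ_j(θ)`. Dividing BAR by `t²` forces the limit of
`φ(θ[t])` to vanish, which is (i) at `θ = 0`; dividing by `t` then gives (ii).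
-/

open Matrix MeasureTheory Filter Topology

section Algebra

variable {ι α : Type*} [DecidableEq ι]

theorem Function.update_eq_add_single_sub [AddCommGroup α] (θ : ι → α) (j : ι) (t : α) :
    Function.update θ j t = θ + Pi.single j (t - θ j) := by
  ext i
  rcases eq_or_ne i j with rfl | hij
  · simp
  · simp [hij]

variable [Fintype ι]

theorem dotProduct_update [NonUnitalNonAssocRing α] (v θ : ι → α) (j : ι) (t : α) :
    v ⬝ᵥ Function.update θ j t = v ⬝ᵥ θ + v j * (t - θ j) := by
  rw [Function.update_eq_add_single_sub, dotProduct_add, dotProduct_single]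

theorem dotProduct_update_of_apply_eq_zero [NonUnitalNonAssocRing α] {v : ι → α} {j : ι}
    (hv : v j = 0) (θ : ι → α) (t : α) : v ⬝ᵥ Function.update θ j t = v ⬝ᵥ θ := by
  rw [dotProduct_update, hv, zero_mul, add_zero]

theorem exists_update_dotProduct_mulVec_update [CommRing α] (S : Matrix ι ι α) (θ : ι → α)
    (j : ι) : ∃ b c : α, ∀ t,
      Function.update θ j t ⬝ᵥ S *ᵥ Function.update θ j t = S j j * t ^ 2 + b * t + c := by
  set e : ι → α := Pi.single j 1
  have hee : e ⬝ᵥ S *ᵥ e = S j j := by simp [e, mulVec_single]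
  refine ⟨θ ⬝ᵥ S *ᵥ e + e ⬝ᵥ S *ᵥ θ - 2 * θ j * S j j,
    θ ⬝ᵥ S *ᵥ θ - θ j * (θ ⬝ᵥ S *ᵥ e + e ⬝ᵥ S *ᵥ θ) + θ j ^ 2 * S j j, fun t => ?_⟩
  have hsingle : Pi.single j (t - θ j) = (t - θ j) • e := by
    rw [← Pi.single_smul', smul_eq_mul, mul_one]
  rw [Function.update_eq_add_single_sub, hsingle, ← hee]
  simp only [mulVec_add, mulVec_smul, dotProduct_add, add_dotProduct, dotProduct_smul,
    smul_dotProduct, smul_eq_mul]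
  ring

end Algebra

section Asymptotics

variable {ι : Type*} [Fintype ι] {F : ℝ → ℝ} {G : ι → ℝ → ℝ} {α β c : ℝ} {r s : ι → ℝ}

theorem eq_zero_of_quadratic_mul_eq_sum {L : ℝ} (hα : α ≠ 0) (hF : Tendsto F atBot (𝓝 L))
    (hG : ∀ i, IsBoundedUnder (· ≤ ·) atBot fun t => ‖G i t‖)
    (heq : ∀ᶠ t in atBot, (α * t ^ 2 + β * t + c) * F t = ∑ i, (r i + s i * t) * G i t) :
    L = 0 := by
  have hinv : Tendsto (fun t : ℝ => t⁻¹) atBot (𝓝 0) := tendsto_inv_atBot_zero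
  have hlhs : Tendsto (fun t => (α + β * t⁻¹ + c * t⁻¹ ^ 2) * F t) atBot (𝓝 (α * L)) := by
    simpa using ((tendsto_const_nhds.add (hinv.const_mul β)).add ((hinv.pow 2).const_mul c)).mul hF
  have hrhs : Tendsto (fun t => ∑ i, (r i * t⁻¹ ^ 2 + s i * t⁻¹) * G i t) atBot (𝓝 0) := by
    simpa using tendsto_finsetSum Finset.univ fun i _ =>
      Tendsto.zero_mul_isBoundedUnder_le
        (by simpa using ((hinv.pow 2).const_mul (r i)).add (hinv.const_mul (s i))) (hG i)
  have hsame : (fun t => (α + β * t⁻¹ + c * t⁻¹ ^ 2) * F t)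
      =ᶠ[atBot] fun t => ∑ i, (r i * t⁻¹ ^ 2 + s i * t⁻¹) * G i t := by
    filter_upwards [heq, eventually_ne_atBot 0] with t h ht
    calc (α + β * t⁻¹ + c * t⁻¹ ^ 2) * F t = t⁻¹ ^ 2 * ((α * t ^ 2 + β * t + c) * F t) := by
          field_simp
      _ = _ := by
          rw [h, Finset.mul_sum]
          congr! 1 with i
          field_simp
  simpa [hα] using tendsto_nhds_unique hlhs (hrhs.congr' hsame.symm)

theorem tendsto_linear_mul_of_quadratic_mul_eq_sum {l : ι → ℝ} (hF : Tendsto F atBot (𝓝 0))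
    (hG : ∀ i, Tendsto (G i) atBot (𝓝 (l i)))
    (heq : ∀ᶠ t in atBot, (α * t ^ 2 + β * t + c) * F t = ∑ i, (r i + s i * t) * G i t)
    (β' : ℝ) : Tendsto (fun t => (α * t + β') * F t) atBot (𝓝 (∑ i, s i * l i)) := by
  have hinv : Tendsto (fun t : ℝ => t⁻¹) atBot (𝓝 0) := tendsto_inv_atBot_zero
  have hsum : Tendsto (fun t => ∑ i, (r i * t⁻¹ + s i) * G i t) atBot (𝓝 (∑ i, s i * l i)) :=
    tendsto_finsetSum _ fun i _ => by
      simpa using ((hinv.const_mul (r i)).add_const (s i)).mul (hG i)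
  have hrest : Tendsto (fun t => (β' - β - c * t⁻¹) * F t) atBot (𝓝 0) := by
    simpa using ((hinv.const_mul c).const_sub (β' - β)).mul hF
  rw [← add_zero (∑ i, s i * l i)]
  refine (hsum.add hrest).congr' ?_
  filter_upwards [heq, eventually_ne_atBot 0] with t h ht
  calc ∑ i, (r i * t⁻¹ + s i) * G i t + (β' - β - c * t⁻¹) * F t
      = t⁻¹ * ∑ i, (r i + s i * t) * G i t + (β' - β - c * t⁻¹) * F t := by
        rw [Finset.mul_sum]
        congr! 2 with i
        field_simp
    _ = (α * t + β') * F t := by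
        rw [← h]
        field_simp
        ring

end Asymptotics

section LaplaceTransform

variable {ι : Type*} {m : Measure (ι → ℝ)} {θ : ι → ℝ}

theorem update_nonpos [DecidableEq ι] (hθ : ∀ i, θ i ≤ 0) (j : ι) {t : ℝ} (ht : t ≤ 0) :
    ∀ i, Function.update θ j t i ≤ 0 :=
  (Function.forall_update_iff θ (p := fun _ y => y ≤ 0)).2 ⟨ht, fun i _ => hθ i⟩

variable [Fintype ι]

theorem exp_dotProduct_le_one {x : ι → ℝ} (hθ : ∀ i, θ i ≤ 0) (hx : ∀ i, 0 ≤ x i) :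
    Real.exp (θ ⬝ᵥ x) ≤ 1 :=
  Real.exp_le_one_iff.2 <| Finset.sum_nonpos fun i _ => mul_nonpos_of_nonpos_of_nonneg (hθ i) (hx i)

variable [DecidableEq ι]

theorem integral_exp_update_dotProduct_of_ae_eq_zero {j : ι} (hj : ∀ᵐ x ∂m, x j = 0) (t : ℝ) :
    ∫ x, Real.exp (Function.update θ j t ⬝ᵥ x) ∂m = ∫ x, Real.exp (θ ⬝ᵥ x) ∂m :=
  integral_congr_ae <| hj.mono fun x hx => by
    simp only [dotProduct_comm _ x, dotProduct_update_of_apply_eq_zero hx]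

theorem tendsto_integral_exp_update_dotProduct_atBot [IsFiniteMeasure m]
    (hm : ∀ᵐ x ∂m, ∀ i, 0 ≤ x i) (hθ : ∀ i, θ i ≤ 0) (j : ι) :
    Tendsto (fun t => ∫ x, Real.exp (Function.update θ j t ⬝ᵥ x) ∂m) atBot
      (𝓝 (∫ x in {x | x j = 0}, Real.exp (θ ⬝ᵥ x) ∂m)) := by
  rw [← integral_indicator (measurableSet_eq_fun (measurable_pi_apply j) measurable_const)]
  refine tendsto_integral_filter_of_dominated_convergence (fun _ => 1)
    (Eventually.of_forall fun t => (by fun_prop : Continuous _).aestronglyMeasurable) ?_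
    (integrable_const 1) ?_
  · filter_upwards [eventually_le_atBot 0] with t ht
    filter_upwards [hm] with x hx
    rw [Real.norm_of_nonneg (Real.exp_pos _).le]
    exact exp_dotProduct_le_one (update_nonpos hθ j ht) hx
  · filter_upwards [hm] with x hx
    simp only [dotProduct_comm _ x, dotProduct_update]
    rcases (hx j).eq_or_lt with hxj | hxj
    · rw [Set.indicator_of_mem (show x ∈ {x | x j = 0} from hxj.symm), ← hxj]
      simp only [zero_mul, add_zero, dotProduct_comm x θ]
      exact tendsto_const_nhds
    · rw [Set.indicator_of_notMem (show x ∉ {x | x j = 0} from hxj.ne')]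
      exact Real.tendsto_exp_atBot.comp <| tendsto_atBot_add_const_left _ _ <|
        (tendsto_atBot_add_const_right _ _ tendsto_id).const_mul_atBot hxj

theorem tendsto_integral_exp_update_dotProduct_atBot_of_boundary [IsFiniteMeasure m]
    (hm : ∀ᵐ x ∂m, ∀ i, 0 ≤ x i) (hθ : ∀ i, θ i ≤ 0) {i : ι} (hi : m {x | x i ≠ 0} = 0)
    (hpair : ∀ k, i ≠ k → m {x | x i = 0 ∧ x k = 0} = 0) (j : ι) :
    Tendsto (fun t => ∫ x, Real.exp (Function.update θ j t ⬝ᵥ x) ∂m) atBot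
      (𝓝 (if i = j then ∫ x, Real.exp (θ ⬝ᵥ x) ∂m else 0)) := by
  split_ifs with hij
  · subst hij
    simp only [integral_exp_update_dotProduct_of_ae_eq_zero (ae_iff.2 (by simpa using hi))]
    exact tendsto_const_nhds
  · have hnull : m {x | x j = 0} = 0 :=
      measure_mono_null (fun x hx => by by_cases h : x i = 0 <;> simp_all)
        (measure_union_null hi (hpair j hij))
    simpa [Measure.restrict_eq_zero.2 hnull] using
      tendsto_integral_exp_update_dotProduct_atBot hm hθ j

end LaplaceTransform

theorem statement13_general (d : ℕ)
    (S : Matrix (Fin d) (Fin d) ℝ)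
    (μ : Fin d → ℝ) (R : Matrix (Fin d) (Fin d) ℝ)
    (π : Measure (Fin d → ℝ)) [IsProbabilityMeasure π]
    (hπsupp : π {x : Fin d → ℝ | ¬ ∀ i, 0 ≤ x i} = 0)
    (ν : Fin d → Measure (Fin d → ℝ))
    (hνfin : ∀ i, IsFiniteMeasure (ν i))
    (hνsupp : ∀ i, ν i {x : Fin d → ℝ | ¬ ∀ m, 0 ≤ x m} = 0)
    (hνconc : ∀ i, ν i {x : Fin d → ℝ | x i ≠ 0} = 0)
    (hνpair : ∀ i j : Fin d, i ≠ j → ν i {x : Fin d → ℝ | x i = 0 ∧ x j = 0} = 0)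
    (φ : (Fin d → ℝ) → ℝ) (hφ : ∀ θ, φ θ = ∫ x, Real.exp (θ ⬝ᵥ x) ∂π)
    (φb : Fin d → (Fin d → ℝ) → ℝ)
    (hφb : ∀ i θ, φb i θ = ∫ x, Real.exp (θ ⬝ᵥ x) ∂(ν i))
    (hBAR : ∀ θ : Fin d → ℝ, (∀ m, θ m ≤ 0) →
      (-(1/2 : ℝ) * (θ ⬝ᵥ S.mulVec θ) - μ ⬝ᵥ θ) * φ θ
        = ∑ i, ((fun m => R m i) ⬝ᵥ θ) * φb i θ)
    (j : Fin d) (hSjj : 0 < S j j) :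
    π {x : Fin d → ℝ | x j = 0} = 0
    ∧ ∀ θ : Fin d → ℝ, (∀ m, θ m ≤ 0) →
        Tendsto (fun t : ℝ => -((1/2 : ℝ) * S j j * t + μ j) * φ (Function.update θ j t))
          atBot (nhds (R j j * φb j θ)) := by
  have key (θ : Fin d → ℝ) (hθ : ∀ m, θ m ≤ 0) :
      ∫ x in {x | x j = 0}, Real.exp (θ ⬝ᵥ x) ∂π = 0 ∧
      Tendsto (fun t : ℝ => -((1/2 : ℝ) * S j j * t + μ j) * φ (Function.update θ j t))
        atBot (𝓝 (R j j * φb j θ)) := by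
    have hF : Tendsto (fun t => φ (Function.update θ j t)) atBot
        (𝓝 (∫ x in {x | x j = 0}, Real.exp (θ ⬝ᵥ x) ∂π)) := by
      simpa only [hφ] using tendsto_integral_exp_update_dotProduct_atBot (ae_iff.2 hπsupp) hθ j
    have hG (i : Fin d) : Tendsto (fun t => φb i (Function.update θ j t)) atBot
        (𝓝 (if i = j then φb i θ else 0)) := by
      have := hνfin i
      simpa only [hφb] using tendsto_integral_exp_update_dotProduct_atBot_of_boundary
        (ae_iff.2 (hνsupp i)) hθ (hνconc i) (hνpair i) j
    obtain ⟨b, c, hquad⟩ := exists_update_dotProduct_mulVec_update S θ j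
    have hline : ∀ᶠ t in atBot,
        (-(1/2) * S j j * t ^ 2 + (-(b/2) - μ j) * t + (-(c/2) - μ ⬝ᵥ θ + μ j * θ j))
          * φ (Function.update θ j t)
        = ∑ i, ((fun m => R m i) ⬝ᵥ θ - R j i * θ j + R j i * t)
          * φb i (Function.update θ j t) := by
      filter_upwards [eventually_le_atBot 0] with t ht
      convert hBAR _ (update_nonpos hθ j ht) using 1
      · rw [hquad, dotProduct_update]
        ring
      · exact Finset.sum_congr rfl fun i _ => by rw [dotProduct_update]; ring
    have hL := eq_zero_of_quadratic_mul_eq_sum (by linarith) hF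
      (fun i => (hG i).norm.isBoundedUnder_le) hline
    refine ⟨hL, ?_⟩
    rw [hL] at hF
    have := tendsto_linear_mul_of_quadratic_mul_eq_sum hF hG hline (-μ j)
    simp only [mul_ite, mul_zero, Finset.sum_ite_eq', Finset.mem_univ, if_true] at this
    exact this.congr fun t => by ring
  refine ⟨?_, fun θ hθ => (key θ hθ).2⟩
  simpa [measureReal_eq_zero_iff] using (key 0 fun _ => le_rfl).1

/-- Suppose `(π; ν_1,…,ν_d)` satisfies the basic adjoint relationship
(BAR) for `(Σ, μ, R)`, and fix `j` with `Σ_{jj} > 0`. Then (i) `π({x : x_j = 0}) = 0`,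
and (ii) for every `θ ≤ 0` componentwise,
`lim_{t→-∞} -((1/2)Σ_{jj} t + μ_j) φ(θ[t]) = R_{jj} φ_j(θ)`, where `θ[t]` is `θ` with
its `j`-th coordinate replaced by `t`. -/
theorem statement13 (d : ℕ) (hd : 1 ≤ d)
    (S : Matrix (Fin d) (Fin d) ℝ) (hSsymm : S.IsSymm)
    (μ : Fin d → ℝ) (R : Matrix (Fin d) (Fin d) ℝ)
    (π : Measure (Fin d → ℝ)) [IsProbabilityMeasure π]
    (hπsupp : π {x : Fin d → ℝ | ¬ ∀ i, 0 ≤ x i} = 0)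
    (ν : Fin d → Measure (Fin d → ℝ))
    (hνfin : ∀ i, IsFiniteMeasure (ν i))
    (hνne : ∀ i, ν i ≠ 0)
    (hνsupp : ∀ i, ν i {x : Fin d → ℝ | ¬ ∀ m, 0 ≤ x m} = 0)
    (hνconc : ∀ i, ν i {x : Fin d → ℝ | x i ≠ 0} = 0)
    (hνpair : ∀ i j : Fin d, i ≠ j → ν i {x : Fin d → ℝ | x i = 0 ∧ x j = 0} = 0)
    (φ : (Fin d → ℝ) → ℝ) (hφ : ∀ θ, φ θ = ∫ x, Real.exp (θ ⬝ᵥ x) ∂π)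
    (φb : Fin d → (Fin d → ℝ) → ℝ)
    (hφb : ∀ i θ, φb i θ = ∫ x, Real.exp (θ ⬝ᵥ x) ∂(ν i))
    (hBAR : ∀ θ : Fin d → ℝ, (∀ m, θ m ≤ 0) →
      (-(1/2 : ℝ) * (θ ⬝ᵥ S.mulVec θ) - μ ⬝ᵥ θ) * φ θ
        = ∑ i, ((fun m => R m i) ⬝ᵥ θ) * φb i θ)
    (j : Fin d) (hSjj : 0 < S j j) :
    π {x : Fin d → ℝ | x j = 0} = 0
    ∧ ∀ θ : Fin d → ℝ, (∀ m, θ m ≤ 0) →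
        Tendsto (fun t : ℝ => -((1/2 : ℝ) * S j j * t + μ j) * φ (Function.update θ j t))
          atBot (nhds (R j j * φb j θ)) :=
  statement13_general d S μ R π hπsupp ν hνfin hνsupp hνconc hνpair φ hφ φb hφb hBAR j hSjj
end

section
/- Assume Σ_{jj} > 0 and R_{jj} ≠ 0 for all j, and suppose (π; ν_1,…,ν_d) satisfies the basic adjoint relationship (BAR) for (Σ, μ, R). Let (K,L) be a partition of {1,…,d} into nonempty sets, and suppose the moment generating function factorizes: φ(θ) = φ(θ̂^K)·φ(θ̂^L) for all θ ≤ 0 componentwise, where θ̂^U denotes the vector agreeing with θ on coordinates in U and equal to 0 elsewhere. Then for every j ∈ K and every θ ≤ 0 componentwise, φ_j(θ) = φ_j(θ̂^K)·φ(θ̂^L). -/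
/-!
Move `θ` along the ray `θ - t e_j`, `t → ∞`. Since `ν_j` lives on `{x_j = 0}`, `φ_j` is constant
on the ray, while for `i ≠ j` the measure `ν_i` sees `x_j > 0` almost everywhere, so `φ_i → 0` by
dominated convergence. In the BAR the left side is `≈ -(Σ_jj / 2) t² φ` and the right side is
`≈ -t R_jj φ_j(θ)`, hence `t φ(θ - t e_j) → 2 R_jj φ_j(θ) / Σ_jj`. For `j ∈ K` the factorization
gives `φ(θ - t e_j) = φ(θ̂^K - t e_j) φ(θ̂^L)`; comparing the two limits and cancelling
`2 R_jj / Σ_jj ≠ 0` yields the claim.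
-/

open Matrix MeasureTheory Filter Topology

section SubSingle

variable {ι : Type*} [Fintype ι] [DecidableEq ι]

lemma sub_single_dotProduct (θ x : ι → ℝ) (j : ι) (t : ℝ) :
    (θ - Pi.single j t) ⬝ᵥ x = θ ⬝ᵥ x - t * x j := by
  rw [sub_dotProduct, single_dotProduct]

lemma dotProduct_sub_single (v θ : ι → ℝ) (j : ι) (t : ℝ) :
    v ⬝ᵥ (θ - Pi.single j t) = v ⬝ᵥ θ - t * v j := by
  rw [dotProduct_comm, sub_single_dotProduct, dotProduct_comm]

lemma sub_single_dotProduct_mulVec_sub_single (S : Matrix ι ι ℝ) (θ : ι → ℝ) (j : ι) (t : ℝ) :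
    (θ - Pi.single j t) ⬝ᵥ S *ᵥ (θ - Pi.single j t)
      = θ ⬝ᵥ S *ᵥ θ - t * ((S *ᵥ θ) j + (θ ᵥ* S) j) + t ^ 2 * S j j := by
  rw [sub_single_dotProduct, dotProduct_mulVec, dotProduct_sub_single, ← dotProduct_mulVec,
    mulVec_sub, Pi.sub_apply, mulVec_single, vecMul]
  simp only [dotProduct, col, Pi.smul_apply, transpose_apply, MulOpposite.smul_eq_mul_unop,
    MulOpposite.unop_op]
  ring

end SubSingle

lemma sub_single_nonpos {ι : Type*} [DecidableEq ι] {θ : ι → ℝ} (hθ : ∀ m, θ m ≤ 0) (j : ι)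
    {t : ℝ} (ht : 0 ≤ t) (m : ι) : (θ - Pi.single j t : ι → ℝ) m ≤ 0 := by
  rcases eq_or_ne m j with rfl | hm
  · simp only [Pi.sub_apply, Pi.single_eq_same]
    linarith [hθ m]
  · simpa [hm] using hθ m

lemma ite_mem_sub_single_of_mem {ι : Type*} [DecidableEq ι] {K : Finset ι} {j : ι} (hj : j ∈ K)
    (θ : ι → ℝ) (t : ℝ) :
    (fun m => if m ∈ K then (θ - Pi.single j t : ι → ℝ) m else 0)
      = (fun m => if m ∈ K then θ m else 0) - Pi.single j t := by
  ext m
  rcases eq_or_ne m j with rfl | hm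
  · simp [hj]
  · simp [hm]

lemma ite_mem_sub_single_of_not_mem {ι : Type*} [DecidableEq ι] {L : Finset ι} {j : ι}
    (hj : j ∉ L) (θ : ι → ℝ) (t : ℝ) :
    (fun m => if m ∈ L then (θ - Pi.single j t : ι → ℝ) m else 0)
      = fun m => if m ∈ L then θ m else 0 := by
  ext m
  split_ifs with hm
  · simp [Pi.single_eq_of_ne (ne_of_mem_of_not_mem hm hj)]
  · rfl

section ExpIntegral

variable {ι : Type*} [Fintype ι] {ν : Measure (ι → ℝ)}

lemma continuous_exp_dotProduct (θ : ι → ℝ) : Continuous fun x : ι → ℝ => Real.exp (θ ⬝ᵥ x) :=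
  Real.continuous_exp.comp (continuous_const.dotProduct continuous_id)

lemma integrable_exp_dotProduct_of_nonpos [IsFiniteMeasure ν] (hν : ∀ᵐ x ∂ν, ∀ m, 0 ≤ x m)
    {θ : ι → ℝ} (hθ : ∀ m, θ m ≤ 0) : Integrable (fun x => Real.exp (θ ⬝ᵥ x)) ν := by
  refine .of_bound (continuous_exp_dotProduct θ).aestronglyMeasurable 1 ?_
  filter_upwards [hν] with x hx
  rw [Real.norm_of_nonneg (Real.exp_pos _).le, Real.exp_le_one_iff]
  exact Finset.sum_nonpos fun m _ => mul_nonpos_of_nonpos_of_nonneg (hθ m) (hx m)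

variable [DecidableEq ι]

lemma integral_exp_sub_single_dotProduct_of_ae_eq_zero {j : ι} (hν : ∀ᵐ x ∂ν, x j = 0)
    (θ : ι → ℝ) (t : ℝ) :
    ∫ x, Real.exp ((θ - Pi.single j t) ⬝ᵥ x) ∂ν = ∫ x, Real.exp (θ ⬝ᵥ x) ∂ν := by
  refine integral_congr_ae ?_
  filter_upwards [hν] with x hx
  rw [sub_single_dotProduct, hx, mul_zero, sub_zero]

lemma tendsto_integral_exp_sub_single_dotProduct {j : ι} (hν : ∀ᵐ x ∂ν, 0 < x j) {θ : ι → ℝ}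
    (hθ : Integrable (fun x => Real.exp (θ ⬝ᵥ x)) ν) :
    Tendsto (fun t => ∫ x, Real.exp ((θ - Pi.single j t) ⬝ᵥ x) ∂ν) atTop (𝓝 0) := by
  rw [← integral_zero (ι → ℝ) ℝ]
  refine tendsto_integral_filter_of_dominated_convergence _
    (.of_forall fun t => (continuous_exp_dotProduct _).aestronglyMeasurable) ?_ hθ ?_
  · filter_upwards [eventually_ge_atTop 0] with t ht
    filter_upwards [hν] with x hx
    rw [Real.norm_of_nonneg (Real.exp_pos _).le, Real.exp_le_exp, sub_single_dotProduct]
    nlinarith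
  · filter_upwards [hν] with x hx
    simp_rw [sub_single_dotProduct]
    exact Real.tendsto_exp_atBot.comp
      (tendsto_atBot_add_const_left _ _ (tendsto_neg_atTop_atBot.comp
        (tendsto_id.atTop_mul_const hx)))

end ExpIntegral

lemma ae_apply_pos_of_ae_apply_eq_zero {ι : Type*} {ν : Measure (ι → ℝ)} {i j : ι}
    (hnonneg : ∀ᵐ x ∂ν, ∀ m, 0 ≤ x m) (hi : ∀ᵐ x ∂ν, x i = 0)
    (hij : ν {x | x i = 0 ∧ x j = 0} = 0) : ∀ᵐ x ∂ν, 0 < x j := by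
  have hij' : ∀ᵐ x ∂ν, ¬(x i = 0 ∧ x j = 0) := ae_iff.2 (by simpa using hij)
  filter_upwards [hnonneg, hi, hij'] with x hx hxi hxij
  exact (hx j).lt_of_ne fun h => hxij ⟨hxi, h.symm⟩

lemma tendsto_mul_of_quadratic_mul_eq {f g : ℝ → ℝ} {a b c ℓ : ℝ} (hc : c ≠ 0)
    (hg : Tendsto (fun t => g t / t) atTop (𝓝 ℓ))
    (hfg : ∀ᶠ t in atTop, (a + b * t + c * t ^ 2) * f t = g t) :
    Tendsto (fun t => t * f t) atTop (𝓝 (ℓ / c)) := by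
  have hquad : Tendsto (fun t : ℝ => (a + b * t + c * t ^ 2) / t ^ 2) atTop (𝓝 c) := by
    have hinv := tendsto_inv_atTop_zero (𝕜 := ℝ)
    have := ((hinv.pow 2).const_mul a).add (hinv.const_mul b) |>.add_const c
    simp only [ne_eq, OfNat.ofNat_ne_zero, not_false_eq_true, zero_pow, mul_zero, add_zero,
      zero_add] at this
    refine this.congr' ?_
    filter_upwards [eventually_gt_atTop 0] with t ht
    field_simp
  refine (hg.div hquad hc).congr' ?_
  filter_upwards [hfg, hquad.eventually_ne hc, eventually_gt_atTop 0] with t hfg hne ht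
  simp only [Pi.div_apply, ← hfg]
  generalize a + b * t + c * t ^ 2 = P at hne ⊢
  have hP : P ≠ 0 := (div_ne_zero_iff.1 hne).1
  field_simp

lemma tendsto_sum_sub_mul_div {ι : Type*} [Fintype ι] {g : ι → ℝ → ℝ} {ℓ r q : ι → ℝ}
    (hg : ∀ i, Tendsto (g i) atTop (𝓝 (ℓ i))) :
    Tendsto (fun t => (∑ i, (r i - t * q i) * g i t) / t) atTop (𝓝 (-(q ⬝ᵥ ℓ))) := by
  have hterm : ∀ i, Tendsto (fun t => (r i / t - q i) * g i t) atTop (𝓝 (-(q i * ℓ i))) := by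
    intro i
    simpa using ((tendsto_const_nhds.div_atTop tendsto_id).sub_const (q i)).mul (hg i)
  rw [dotProduct, ← Finset.sum_neg_distrib]
  refine (tendsto_finsetSum Finset.univ fun i _ => hterm i).congr' ?_
  filter_upwards [eventually_gt_atTop 0] with t ht
  rw [Finset.sum_div]
  refine Finset.sum_congr rfl fun i _ => ?_
  field_simp

lemma tendsto_mul_apply_sub_single_of_bar {ι : Type*} [Fintype ι] [DecidableEq ι]
    {S R : Matrix ι ι ℝ} {μ : ι → ℝ} {φ : (ι → ℝ) → ℝ} {φb : ι → (ι → ℝ) → ℝ}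
    (hBAR : ∀ θ : ι → ℝ, (∀ m, θ m ≤ 0) →
      (-(1/2 : ℝ) * (θ ⬝ᵥ S *ᵥ θ) - μ ⬝ᵥ θ) * φ θ = ∑ i, ((fun m => R m i) ⬝ᵥ θ) * φb i θ)
    {j : ι} (hS : S j j ≠ 0) {θ : ι → ℝ} (hθ : ∀ m, θ m ≤ 0)
    (hφbj : ∀ t, φb j (θ - Pi.single j t) = φb j θ)
    (hφbi : ∀ i ≠ j, Tendsto (fun t => φb i (θ - Pi.single j t)) atTop (𝓝 0)) :
    Tendsto (fun t => t * φ (θ - Pi.single j t)) atTop (𝓝 (R j j * φb j θ / (S j j / 2))) := by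
  have hφb : ∀ i, Tendsto (fun t => φb i (θ - Pi.single j t)) atTop
      (𝓝 ((Pi.single j (φb j θ) : ι → ℝ) i)) := by
    intro i
    rcases eq_or_ne i j with rfl | hij
    · simp [hφbj]
    · simpa [hij] using hφbi i hij
  have hsum := tendsto_sum_sub_mul_div (r := fun i => (fun m => R m i) ⬝ᵥ θ)
    (q := fun i => R j i) hφb
  rw [dotProduct_single] at hsum
  have hlim := tendsto_mul_of_quadratic_mul_eq (f := fun t => φ (θ - Pi.single j t))
    (a := -(1/2 : ℝ) * (θ ⬝ᵥ S *ᵥ θ) - μ ⬝ᵥ θ) (b := ((S *ᵥ θ) j + (θ ᵥ* S) j) / 2 + μ j)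
    (neg_ne_zero.2 (div_ne_zero hS two_ne_zero)) hsum ?_
  · rwa [neg_div_neg_eq] at hlim
  filter_upwards [eventually_ge_atTop 0] with t ht
  have hBARt := hBAR _ (sub_single_nonpos hθ j ht)
  simp only [sub_single_dotProduct_mulVec_sub_single, dotProduct_sub_single] at hBARt
  linear_combination hBARt

theorem statement14_general (d : ℕ)
    (S : Matrix (Fin d) (Fin d) ℝ)
    (μ : Fin d → ℝ) (R : Matrix (Fin d) (Fin d) ℝ)
    (hSd : ∀ j, 0 < S j j) (hRd : ∀ j, R j j ≠ 0)
    (ν : Fin d → Measure (Fin d → ℝ))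
    (hνfin : ∀ i, IsFiniteMeasure (ν i))
    (hνsupp : ∀ i, ν i {x : Fin d → ℝ | ¬ ∀ m, 0 ≤ x m} = 0)
    (hνconc : ∀ i, ν i {x : Fin d → ℝ | x i ≠ 0} = 0)
    (hνpair : ∀ i j : Fin d, i ≠ j → ν i {x : Fin d → ℝ | x i = 0 ∧ x j = 0} = 0)
    (φ : (Fin d → ℝ) → ℝ)
    (φb : Fin d → (Fin d → ℝ) → ℝ)
    (hφb : ∀ i θ, φb i θ = ∫ x, Real.exp (θ ⬝ᵥ x) ∂(ν i))
    (hBAR : ∀ θ : Fin d → ℝ, (∀ m, θ m ≤ 0) →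
      (-(1/2 : ℝ) * (θ ⬝ᵥ S.mulVec θ) - μ ⬝ᵥ θ) * φ θ
        = ∑ i, ((fun m => R m i) ⬝ᵥ θ) * φb i θ)
    (K L : Finset (Fin d))
    (hdisj : Disjoint K L)
    (hfac : ∀ θ : Fin d → ℝ, (∀ m, θ m ≤ 0) →
      φ θ = φ (fun m => if m ∈ K then θ m else 0) * φ (fun m => if m ∈ L then θ m else 0)) :
    ∀ j ∈ K, ∀ θ : Fin d → ℝ, (∀ m, θ m ≤ 0) →
      φb j θ = φb j (fun m => if m ∈ K then θ m else 0)
        * φ (fun m => if m ∈ L then θ m else 0) := by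
  intro j hj θ hθ
  have hconc : ∀ i, ∀ᵐ x ∂ν i, x i = 0 := fun i => ae_iff.2 (by simpa using hνconc i)
  have hlim : ∀ θ : Fin d → ℝ, (∀ m, θ m ≤ 0) → Tendsto (fun t => t * φ (θ - Pi.single j t))
      atTop (𝓝 (R j j * φb j θ / (S j j / 2))) := fun θ hθ =>
    tendsto_mul_apply_sub_single_of_bar hBAR (hSd j).ne' hθ
      (fun t => by simp only [hφb, integral_exp_sub_single_dotProduct_of_ae_eq_zero (hconc j)])
      fun i hij => by
        simp only [hφb]
        exact tendsto_integral_exp_sub_single_dotProduct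
          (ae_apply_pos_of_ae_apply_eq_zero (ae_iff.2 (hνsupp i)) (hconc i) (hνpair i j hij))
          (integrable_exp_dotProduct_of_nonpos (ae_iff.2 (hνsupp i)) hθ)
  set θK : Fin d → ℝ := fun m => if m ∈ K then θ m else 0
  set θL : Fin d → ℝ := fun m => if m ∈ L then θ m else 0
  have hθK : ∀ m, θK m ≤ 0 := fun m => by dsimp only [θK]; split_ifs <;> simp [hθ m]
  have hfac_ray : ∀ᶠ t in atTop,
      t * φ (θ - Pi.single j t) = t * φ (θK - Pi.single j t) * φ θL := by
    filter_upwards [eventually_ge_atTop 0] with t ht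
    rw [hfac _ (sub_single_nonpos hθ j ht), ite_mem_sub_single_of_mem hj,
      ite_mem_sub_single_of_not_mem (Finset.disjoint_left.1 hdisj hj), mul_assoc]
  have heq := tendsto_nhds_unique ((hlim θ hθ).congr' hfac_ray) ((hlim θK hθK).mul_const (φ θL))
  field_simp [(hSd j).ne'] at heq
  exact mul_left_cancel₀ (hRd j) (by linear_combination heq)

/-- Suppose `Σ_{jj} > 0` and `R_{jj} ≠ 0` for all `j`, and
`(π; ν_1,…,ν_d)` satisfies the basic adjoint relationship (BAR) for `(Σ, μ, R)`.
If `(K,L)` is a nonempty partition of the coordinates and the moment generating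
function factorizes, `φ(θ) = φ(θ̂^K) φ(θ̂^L)` for all `θ ≤ 0`, then for every `j ∈ K`
and `θ ≤ 0`, `φ_j(θ) = φ_j(θ̂^K) φ(θ̂^L)`. -/
theorem statement14 (d : ℕ) (hd : 2 ≤ d)
    (S : Matrix (Fin d) (Fin d) ℝ) (hSsymm : S.IsSymm)
    (μ : Fin d → ℝ) (R : Matrix (Fin d) (Fin d) ℝ)
    (hSd : ∀ j, 0 < S j j) (hRd : ∀ j, R j j ≠ 0)
    (π : Measure (Fin d → ℝ)) [IsProbabilityMeasure π]
    (hπsupp : π {x : Fin d → ℝ | ¬ ∀ i, 0 ≤ x i} = 0)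
    (ν : Fin d → Measure (Fin d → ℝ))
    (hνfin : ∀ i, IsFiniteMeasure (ν i))
    (hνne : ∀ i, ν i ≠ 0)
    (hνsupp : ∀ i, ν i {x : Fin d → ℝ | ¬ ∀ m, 0 ≤ x m} = 0)
    (hνconc : ∀ i, ν i {x : Fin d → ℝ | x i ≠ 0} = 0)
    (hνpair : ∀ i j : Fin d, i ≠ j → ν i {x : Fin d → ℝ | x i = 0 ∧ x j = 0} = 0)
    (φ : (Fin d → ℝ) → ℝ) (hφ : ∀ θ, φ θ = ∫ x, Real.exp (θ ⬝ᵥ x) ∂π)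
    (φb : Fin d → (Fin d → ℝ) → ℝ)
    (hφb : ∀ i θ, φb i θ = ∫ x, Real.exp (θ ⬝ᵥ x) ∂(ν i))
    (hBAR : ∀ θ : Fin d → ℝ, (∀ m, θ m ≤ 0) →
      (-(1/2 : ℝ) * (θ ⬝ᵥ S.mulVec θ) - μ ⬝ᵥ θ) * φ θ
        = ∑ i, ((fun m => R m i) ⬝ᵥ θ) * φb i θ)
    (K L : Finset (Fin d)) (hK : K.Nonempty) (hL : L.Nonempty)
    (hdisj : Disjoint K L) (hcover : K ∪ L = Finset.univ)
    (hfac : ∀ θ : Fin d → ℝ, (∀ m, θ m ≤ 0) →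
      φ θ = φ (fun m => if m ∈ K then θ m else 0) * φ (fun m => if m ∈ L then θ m else 0)) :
    ∀ j ∈ K, ∀ θ : Fin d → ℝ, (∀ m, θ m ≤ 0) →
      φb j θ = φb j (fun m => if m ∈ K then θ m else 0)
        * φ (fun m => if m ∈ L then θ m else 0) :=
  statement14_general d S μ R hSd hRd ν hνfin hνsupp hνconc hνpair φ φb hφb hBAR K L hdisj hfac
end

section
/- Assume Σ_{ℓℓ} > 0 for every ℓ, and suppose (π; ν_1,…,ν_d) satisfies the basic adjoint relationship (BAR) for (Σ, μ, R). Then for each ℓ ∈ {1,…,d}: (i) for all t < 0, -( (1/2) Σ_{ℓℓ} t + μ_ℓ ) φ(t e_ℓ) = Σ_{j=1}^d R_{ℓj} φ_j(t e_ℓ), where t e_ℓ is the vector with t in coordinate ℓ and 0 elsewhere; (ii) for every t < min(0, -2μ_ℓ/Σ_{ℓℓ}), Σ_{j=1}^d R_{ℓj} φ_j(t e_ℓ) > 0; (iii) lim_{t→-∞} Σ_{j=1}^d R_{ℓj} φ_j(t e_ℓ) = R_{ℓℓ} ν_ℓ(ℝ₊^d), and hence R_{ℓℓ} ν_ℓ(ℝ₊^d)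 ≥ 0; and (iv) π({x ∈ ℝ₊^d : x_ℓ = 0}) = 0. -/
open Matrix MeasureTheory Filter

open scoped Topology

/-!
Along the axis `θ = t e_ℓ` the BAR reduces, after division by `t < 0`, to
`-(Σ_{ℓℓ} t / 2 + μ_ℓ) φ(t e_ℓ) = ∑_j R_{ℓj} φ_j(t e_ℓ)`. As `t → -∞`, dominated convergence
gives `∫ e^{t x_ℓ} dm → m{x_ℓ = 0}` for every finite measure `m` on the orthant; since `ν_j`
charges `{x_ℓ = 0}` only for `j = ℓ`, the right-hand side tends to `R_{ℓℓ} ν_ℓ(ℝ₊^d)`.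
The coefficient on the left is eventually positive and tends to `+∞`, which gives the sign
statements and forces `π{x_ℓ = 0} = lim φ(t e_ℓ) = 0`.
-/

section Laplace

variable {α : Type*} [MeasurableSpace α] {m : Measure α} {f : α → ℝ}

lemma exp_mul_le_one {t a : ℝ} (ht : t ≤ 0) (ha : 0 ≤ a) : Real.exp (t * a) ≤ 1 :=
  Real.exp_le_one_iff.mpr (mul_nonpos_of_nonpos_of_nonneg ht ha)

lemma tendsto_exp_mul_atBot {a : ℝ} (ha : 0 ≤ a) :
    Tendsto (fun t => Real.exp (t * a)) atBot (𝓝 (if a = 0 then 1 else 0)) := by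
  rcases ha.eq_or_lt with rfl | ha
  · simp
  · rw [if_neg ha.ne']
    exact Real.tendsto_exp_atBot.comp (tendsto_id.atBot_mul_const ha)

lemma integrable_exp_mul [IsFiniteMeasure m] (hf : Measurable f) (hf0 : 0 ≤ᵐ[m] f) {t : ℝ}
    (ht : t ≤ 0) : Integrable (fun x => Real.exp (t * f x)) m := by
  refine Integrable.of_bound (by fun_prop) 1 ?_
  filter_upwards [hf0] with x hx
  simpa [abs_of_pos (Real.exp_pos _)] using exp_mul_le_one ht hx

lemma tendsto_integral_exp_mul_atBot [IsFiniteMeasure m] (hf : Measurable f)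
    (hf0 : 0 ≤ᵐ[m] f) :
    Tendsto (fun t => ∫ x, Real.exp (t * f x) ∂m) atBot (𝓝 (m.real {x | f x = 0})) := by
  have hzero : MeasurableSet {x | f x = 0} := hf (measurableSet_singleton 0)
  rw [← integral_indicator_one hzero]
  refine tendsto_integral_filter_of_dominated_convergence (fun _ => 1)
    (Eventually.of_forall fun t => by fun_prop) ?_ (integrable_const 1) ?_
  · filter_upwards [eventually_le_atBot 0] with t ht
    filter_upwards [hf0] with x hx
    simpa [abs_of_pos (Real.exp_pos _)] using exp_mul_le_one ht hx
  · filter_upwards [hf0] with x hx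
    simpa [Set.indicator_apply] using tendsto_exp_mul_atBot hx

end Laplace

lemma eq_zero_of_tendsto_of_tendsto_mul {β : Type*} {l : Filter β} [l.NeBot] {f g : β → ℝ}
    {p L : ℝ} (hf : Tendsto f l (𝓝 p)) (hg : Tendsto g l atTop)
    (hgf : Tendsto (fun x => g x * f x) l (𝓝 L)) : p = 0 := by
  have hf0 : Tendsto f l (𝓝 0) := by
    have h := hgf.mul (tendsto_inv_atTop_zero.comp hg)
    rw [mul_zero] at h
    refine h.congr' ?_
    filter_upwards [hg.eventually_gt_atTop 0] with x hx
    simp only [Function.comp_apply]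
    field_simp [hx.ne']
  exact tendsto_nhds_unique hf hf0

lemma tendsto_neg_mul_add_atBot {a : ℝ} (ha : 0 < a) (b : ℝ) :
    Tendsto (fun t => -(a * t + b)) atBot atTop :=
  tendsto_neg_atBot_atTop.comp
    (tendsto_atBot_add_const_right _ b (tendsto_id.const_mul_atBot ha))

section Boundary

variable {ι : Type*} {ν : Measure (ι → ℝ)} {i j : ι}

lemma measure_coord_eq_zero_of_pair (hconc : ν {x | x i ≠ 0} = 0)
    (hpair : ν {x | x i = 0 ∧ x j = 0} = 0) : ν {x | x j = 0} = 0 :=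
  measure_mono_null (fun x hx => (em (x i = 0)).elim (fun hi => Or.inr ⟨hi, hx⟩) Or.inl)
    (measure_union_null hconc hpair)

lemma measure_coord_eq_zero_eq_univ (hconc : ν {x | x i ≠ 0} = 0) :
    ν {x | x i = 0} = ν Set.univ :=
  measure_congr (ae_eq_univ.mpr hconc)

lemma ae_coord_nonneg (h : ν {x | ¬ ∀ i, 0 ≤ x i} = 0) (ℓ : ι) :
    0 ≤ᵐ[ν] fun x => x ℓ := by
  filter_upwards [ae_iff.mpr h] with x hx using hx ℓ

lemma tendsto_sum_boundary_integral_atBot [Fintype ι] [DecidableEq ι] (R : Matrix ι ι ℝ)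
    {ν : ι → Measure (ι → ℝ)} [∀ i, IsFiniteMeasure (ν i)]
    (hsupp : ∀ i, ν i {x | ¬ ∀ m, 0 ≤ x m} = 0) (hconc : ∀ i, ν i {x | x i ≠ 0} = 0)
    (hpair : ∀ i j, i ≠ j → ν i {x | x i = 0 ∧ x j = 0} = 0) (ℓ : ι) :
    Tendsto (fun t => ∑ j, R ℓ j * ∫ x, Real.exp (t * x ℓ) ∂(ν j)) atBot
      (𝓝 (R ℓ ℓ * (ν ℓ Set.univ).toReal)) := by
  have hval :
      ∑ j, R ℓ j * (ν j).real {x | x ℓ = 0} = R ℓ ℓ * (ν ℓ Set.univ).toReal := by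
    rw [Finset.sum_eq_single ℓ (fun j _ hj => by
      simp [measureReal_def, measure_coord_eq_zero_of_pair (hconc j) (hpair j ℓ hj)])
      (by simp), measureReal_def, measure_coord_eq_zero_eq_univ (hconc ℓ)]
  rw [← hval]
  exact tendsto_finsetSum _ fun j _ => (tendsto_integral_exp_mul_atBot
    (measurable_pi_apply ℓ) (ae_coord_nonneg (hsupp j) ℓ)).const_mul _

end Boundary

lemma bar_along_axis {ι : Type*} [Fintype ι] [DecidableEq ι] {S : Matrix ι ι ℝ} {μ : ι → ℝ}
    {R : Matrix ι ι ℝ} {φ : (ι → ℝ) → ℝ} {φb : ι → (ι → ℝ) → ℝ}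
    (hBAR : ∀ θ : ι → ℝ, (∀ m, θ m ≤ 0) →
      (-(1/2 : ℝ) * (θ ⬝ᵥ S.mulVec θ) - μ ⬝ᵥ θ) * φ θ
        = ∑ i, ((fun m => R m i) ⬝ᵥ θ) * φb i θ)
    (ℓ : ι) {t : ℝ} (ht : t < 0) :
    -((1/2 : ℝ) * S ℓ ℓ * t + μ ℓ) * φ (Pi.single ℓ t)
      = ∑ j, R ℓ j * φb j (Pi.single ℓ t) := by
  have hθ : ∀ m, (Pi.single ℓ t : ι → ℝ) m ≤ 0 := fun m => by
    rw [Pi.single_apply]; split_ifs <;> simp [ht.le]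
  have h := hBAR _ hθ
  simp only [mulVec_single, single_dotProduct, dotProduct_single, Pi.smul_apply, col_apply,
    op_smul_eq_mul] at h
  refine mul_left_cancel₀ ht.ne ?_
  rw [Finset.mul_sum]
  calc t * (-((1/2 : ℝ) * S ℓ ℓ * t + μ ℓ) * φ (Pi.single ℓ t))
      = (-(1/2) * (t * (S ℓ ℓ * t)) - μ ℓ * t) * φ (Pi.single ℓ t) := by ring
    _ = ∑ j, R ℓ j * t * φb j (Pi.single ℓ t) := h
    _ = ∑ j, t * (R ℓ j * φb j (Pi.single ℓ t)) := Finset.sum_congr rfl fun _ _ => by ring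

theorem statement15_general (d : ℕ)
    (S : Matrix (Fin d) (Fin d) ℝ)
    (μ : Fin d → ℝ) (R : Matrix (Fin d) (Fin d) ℝ)
    (hSd : ∀ ℓ, 0 < S ℓ ℓ)
    (π : Measure (Fin d → ℝ)) [IsProbabilityMeasure π]
    (hπsupp : π {x : Fin d → ℝ | ¬ ∀ i, 0 ≤ x i} = 0)
    (ν : Fin d → Measure (Fin d → ℝ))
    (hνfin : ∀ i, IsFiniteMeasure (ν i))
    (hνsupp : ∀ i, ν i {x : Fin d → ℝ | ¬ ∀ m, 0 ≤ x m} = 0)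
    (hνconc : ∀ i, ν i {x : Fin d → ℝ | x i ≠ 0} = 0)
    (hνpair : ∀ i j : Fin d, i ≠ j → ν i {x : Fin d → ℝ | x i = 0 ∧ x j = 0} = 0)
    (φ : (Fin d → ℝ) → ℝ) (hφ : ∀ θ, φ θ = ∫ x, Real.exp (θ ⬝ᵥ x) ∂π)
    (φb : Fin d → (Fin d → ℝ) → ℝ)
    (hφb : ∀ i θ, φb i θ = ∫ x, Real.exp (θ ⬝ᵥ x) ∂(ν i))
    (hBAR : ∀ θ : Fin d → ℝ, (∀ m, θ m ≤ 0) →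
      (-(1/2 : ℝ) * (θ ⬝ᵥ S.mulVec θ) - μ ⬝ᵥ θ) * φ θ
        = ∑ i, ((fun m => R m i) ⬝ᵥ θ) * φb i θ) :
    ∀ ℓ : Fin d,
      (∀ t : ℝ, t < 0 →
        -((1/2 : ℝ) * S ℓ ℓ * t + μ ℓ) * φ (fun m => if m = ℓ then t else 0)
          = ∑ j, R ℓ j * φb j (fun m => if m = ℓ then t else 0))
      ∧ (∀ t : ℝ, t < min 0 (-2 * μ ℓ / S ℓ ℓ) →
          0 < ∑ j, R ℓ j * φb j (fun m => if m = ℓ then t else 0))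
      ∧ Tendsto (fun t : ℝ => ∑ j, R ℓ j * φb j (fun m => if m = ℓ then t else 0))
          atBot (nhds (R ℓ ℓ * (ν ℓ Set.univ).toReal))
      ∧ 0 ≤ R ℓ ℓ * (ν ℓ Set.univ).toReal
      ∧ π {x : Fin d → ℝ | x ℓ = 0} = 0 := by
  intro ℓ
  simp only [← Pi.single_apply]
  have hφℓ : ∀ t, φ (Pi.single ℓ t) = ∫ x, Real.exp (t * x ℓ) ∂π := by
    simp [hφ, single_dotProduct]
  have hφbℓ : ∀ j t, φb j (Pi.single ℓ t) = ∫ x, Real.exp (t * x ℓ) ∂(ν j) := by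
    simp [hφb, single_dotProduct]
  have axis : ∀ t < 0, -((1/2 : ℝ) * S ℓ ℓ * t + μ ℓ) * φ (Pi.single ℓ t)
      = ∑ j, R ℓ j * φb j (Pi.single ℓ t) := fun t ht => bar_along_axis hBAR ℓ ht
  have boundary_pos :
      ∀ t < min 0 (-2 * μ ℓ / S ℓ ℓ), 0 < ∑ j, R ℓ j * φb j (Pi.single ℓ t) := by
    intro t ht
    have ht0 : t < 0 := ht.trans_le (min_le_left _ _)
    have htμ : t * S ℓ ℓ < -2 * μ ℓ :=
      (lt_div_iff₀ (hSd ℓ)).mp (ht.trans_le (min_le_right _ _))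
    rw [← axis t ht0, hφℓ]
    exact mul_pos (by linarith) (integral_exp_pos (integrable_exp_mul (by fun_prop)
      (ae_coord_nonneg hπsupp ℓ) ht0.le))
  have boundary_lim : Tendsto (fun t => ∑ j, R ℓ j * φb j (Pi.single ℓ t)) atBot
      (𝓝 (R ℓ ℓ * (ν ℓ Set.univ).toReal)) := by
    simpa only [hφbℓ] using tendsto_sum_boundary_integral_atBot R hνsupp hνconc hνpair ℓ
  refine ⟨axis, boundary_pos, boundary_lim, ?_, ?_⟩
  · exact ge_of_tendsto boundary_lim
      ((eventually_lt_atBot _).mono fun t ht => (boundary_pos t ht).le)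
  · have hπlim := tendsto_integral_exp_mul_atBot (measurable_pi_apply ℓ)
      (ae_coord_nonneg hπsupp ℓ)
    simp only [← hφℓ] at hπlim
    have hcoef := tendsto_neg_mul_add_atBot (mul_pos one_half_pos (hSd ℓ)) (μ ℓ)
    have hprod :=
      boundary_lim.congr' ((eventually_lt_atBot 0).mono fun t ht => (axis t ht).symm)
    exact (measureReal_eq_zero_iff).mp (eq_zero_of_tendsto_of_tendsto_mul hπlim hcoef hprod)

/-- Suppose `Σ_{ℓℓ} > 0` for every `ℓ` and `(π; ν_1,…,ν_d)` satisfies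
the basic adjoint relationship (BAR) for `(Σ, μ, R)`. Then for each `ℓ`:
(i) for all `t < 0`, `-((1/2)Σ_{ℓℓ}t + μ_ℓ) φ(t e_ℓ) = ∑_j R_{ℓj} φ_j(t e_ℓ)`;
(ii) for every `t < min(0, -2μ_ℓ/Σ_{ℓℓ})`, `∑_j R_{ℓj} φ_j(t e_ℓ) > 0`;
(iii) `∑_j R_{ℓj} φ_j(t e_ℓ) → R_{ℓℓ} ν_ℓ(ℝ₊^d)` as `t → -∞`, hence
`R_{ℓℓ} ν_ℓ(ℝ₊^d) ≥ 0`; and (iv) `π({x : x_ℓ = 0}) = 0`. -/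
theorem statement15 (d : ℕ) (hd : 1 ≤ d)
    (S : Matrix (Fin d) (Fin d) ℝ) (hSsymm : S.IsSymm)
    (μ : Fin d → ℝ) (R : Matrix (Fin d) (Fin d) ℝ)
    (hSd : ∀ ℓ, 0 < S ℓ ℓ)
    (π : Measure (Fin d → ℝ)) [IsProbabilityMeasure π]
    (hπsupp : π {x : Fin d → ℝ | ¬ ∀ i, 0 ≤ x i} = 0)
    (ν : Fin d → Measure (Fin d → ℝ))
    (hνfin : ∀ i, IsFiniteMeasure (ν i))
    (hνne : ∀ i, ν i ≠ 0)
    (hνsupp : ∀ i, ν i {x : Fin d → ℝ | ¬ ∀ m, 0 ≤ x m} = 0)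
    (hνconc : ∀ i, ν i {x : Fin d → ℝ | x i ≠ 0} = 0)
    (hνpair : ∀ i j : Fin d, i ≠ j → ν i {x : Fin d → ℝ | x i = 0 ∧ x j = 0} = 0)
    (φ : (Fin d → ℝ) → ℝ) (hφ : ∀ θ, φ θ = ∫ x, Real.exp (θ ⬝ᵥ x) ∂π)
    (φb : Fin d → (Fin d → ℝ) → ℝ)
    (hφb : ∀ i θ, φb i θ = ∫ x, Real.exp (θ ⬝ᵥ x) ∂(ν i))
    (hBAR : ∀ θ : Fin d → ℝ, (∀ m, θ m ≤ 0) →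
      (-(1/2 : ℝ) * (θ ⬝ᵥ S.mulVec θ) - μ ⬝ᵥ θ) * φ θ
        = ∑ i, ((fun m => R m i) ⬝ᵥ θ) * φb i θ) :
    ∀ ℓ : Fin d,
      (∀ t : ℝ, t < 0 →
        -((1/2 : ℝ) * S ℓ ℓ * t + μ ℓ) * φ (fun m => if m = ℓ then t else 0)
          = ∑ j, R ℓ j * φb j (fun m => if m = ℓ then t else 0))
      ∧ (∀ t : ℝ, t < min 0 (-2 * μ ℓ / S ℓ ℓ) →
          0 < ∑ j, R ℓ j * φb j (fun m => if m = ℓ then t else 0))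
      ∧ Tendsto (fun t : ℝ => ∑ j, R ℓ j * φb j (fun m => if m = ℓ then t else 0))
          atBot (nhds (R ℓ ℓ * (ν ℓ Set.univ).toReal))
      ∧ 0 ≤ R ℓ ℓ * (ν ℓ Set.univ).toReal
      ∧ π {x : Fin d → ℝ | x ℓ = 0} = 0 :=
  statement15_general d S μ R hSd π hπsupp ν hνfin hνsupp hνconc hνpair φ hφ φb hφb hBAR
end
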